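/- arXiv:2001.10769 — 10 statements merged into one kernel-verified Lean document; each statement's English description precedes it below -/
import Mathlib

section
/- Let E₁,…,E₁₀ be an isotropic 10-sequence in the Enriques lattice Λ. Then there exists D ∈ Λ with 3·D = E₁+⋯+E₁₀; moreover, any such D satisfies ⟨D,D⟩ = 10 and ⟨D,Eᵢ⟩ = 3 for every i ∈ {1,…,10}. (This is the lattice-theoretic content of Lemma 2.3 of the paper: the 3-divisibility of the sum of an isotropic 10-sequence.) -/
/-- Gram matrix of the Enriques lattice `U ⊕ E₈(-1)`: the orthogonal direct sum of the
hyperbolic plane and the negative of the E₈ Cartan matrix. -/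
def enriquesGram : Matrix (Fin 10) (Fin 10) ℤ :=
  !![0, 1, 0, 0, 0, 0, 0, 0, 0, 0;
     1, 0, 0, 0, 0, 0, 0, 0, 0, 0;
     0, 0, -2, 0, 1, 0, 0, 0, 0, 0;
     0, 0, 0, -2, 0, 1, 0, 0, 0, 0;
     0, 0, 1, 0, -2, 1, 0, 0, 0, 0;
     0, 0, 0, 1, 1, -2, 1, 0, 0, 0;
     0, 0, 0, 0, 0, 1, -2, 1, 0, 0;
     0, 0, 0, 0, 0, 0, 1, -2, 1, 0;
     0, 0, 0, 0, 0, 0, 0, 1, -2, 1;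
     0, 0, 0, 0, 0, 0, 0, 0, 1, -2]

/-- The symmetric bilinear pairing of the Enriques lattice `Λ = ℤ¹⁰`. -/
def epair (x y : Fin 10 → ℤ) : ℤ := ∑ i, ∑ j, x i * enriquesGram i j * y j

/-- An isotropic 10-sequence in the Enriques lattice: `⟨Eᵢ,Eᵢ⟩ = 0` and `⟨Eᵢ,Eⱼ⟩ = 1`
for `i ≠ j`. -/
def IsIsotropicTenSeq (E : Fin 10 → Fin 10 → ℤ) : Prop :=
  (∀ i, epair (E i) (E i) = 0) ∧ ∀ i j, i ≠ j → epair (E i) (E j) = 1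

/-! Let `M` be the matrix with rows `Eᵢ` and `G` the Gram matrix of `Λ`. Then `M G Mᵀ = J - I`
has determinant `-9` and `G` is unimodular, so `det M = ±3`. For `S = ∑ Eᵢ` every `⟨Eᵢ, S⟩` is `9`,
i.e. `M (G S) = 9·𝟙`; multiplying by the adjugate of `M` gives `9 ∣ ±3 · G S`, so `3 ∣ G S`, and
unimodularity of `G` gives `3 ∣ S`. The values of `⟨D, D⟩` and `⟨D, Eᵢ⟩` then follow by
bilinearity from `⟨S, S⟩ = 90` and `⟨S, Eᵢ⟩ = 9`. -/

open Matrix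

section Matrix

variable {n R : Type*} [Fintype n] [DecidableEq n] [CommRing R]

theorem det_of_fun_one_sub_one :
    (of (fun _ _ => 1) - 1 : Matrix n n R).det = (-1) ^ Fintype.card n * (1 - Fintype.card n) := by
  have h : (of (fun _ _ => 1) - 1 : Matrix n n R) =
      -(1 - replicateCol Unit (1 : n → R) * replicateRow Unit (1 : n → R)) := by
    ext i j
    simp [mul_apply]
  rw [h, det_neg, det_one_sub_mul_comm, det_unique]
  simp [mul_apply]

theorem dvd_det_mul_of_mulVec_eq {A : Matrix n n R} {x y : n → R} {c : R} (hxy : A *ᵥ x = y)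
    (hy : ∀ i, c ∣ y i) (i : n) : c ∣ A.det * x i := by
  have h : A.det • x = A.adjugate *ᵥ y := by
    rw [← hxy, mulVec_mulVec, adjugate_mul, smul_mulVec, one_mulVec]
  rw [← smul_eq_mul, ← Pi.smul_apply, h]
  exact Finset.dvd_sum fun j _ => (hy j).mul_left _

theorem dvd_of_isUnit_det_of_dvd_mulVec {A : Matrix n n R} (hA : IsUnit A.det) {x : n → R}
    {c : R} (h : ∀ i, c ∣ (A *ᵥ x) i) (i : n) : c ∣ x i :=
  hA.dvd_mul_left.mp (dvd_det_mul_of_mulVec_eq rfl h i)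

end Matrix

theorem enriquesGram_isSymm : enriquesGram.IsSymm := by decide

-- `U` is its own inverse; the `E₈(-1)` block is minus the inverse of the E₈ Cartan matrix.
def enriquesGramInv : Matrix (Fin 10) (Fin 10) ℤ :=
  !![0, 1, 0, 0, 0, 0, 0, 0, 0, 0;
     1, 0, 0, 0, 0, 0, 0, 0, 0, 0;
     0, 0, -4, -5, -7, -10, -8, -6, -4, -2;
     0, 0, -5, -8, -10, -15, -12, -9, -6, -3;
     0, 0, -7, -10, -14, -20, -16, -12, -8, -4;
     0, 0, -10, -15, -20, -30, -24, -18, -12, -6;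
     0, 0, -8, -12, -16, -24, -20, -15, -10, -5;
     0, 0, -6, -9, -12, -18, -15, -12, -8, -4;
     0, 0, -4, -6, -8, -12, -10, -8, -6, -3;
     0, 0, -2, -3, -4, -6, -5, -4, -3, -2]

theorem enriquesGram_mul_enriquesGramInv : enriquesGram * enriquesGramInv = 1 := by decide

theorem isUnit_det_enriquesGram : IsUnit enriquesGram.det :=
  IsUnit.of_mul_eq_one _ (by rw [← det_mul, enriquesGram_mul_enriquesGramInv, det_one])

theorem epair_eq_dotProduct (x y : Fin 10 → ℤ) : epair x y = x ⬝ᵥ (enriquesGram *ᵥ y) := by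
  simp only [epair, dotProduct, mulVec, Finset.mul_sum, mul_assoc]

theorem epair_comm (x y : Fin 10 → ℤ) : epair x y = epair y x := by
  rw [epair_eq_dotProduct, epair_eq_dotProduct, dotProduct_mulVec, ← mulVec_transpose,
    enriquesGram_isSymm.eq, dotProduct_comm]

theorem epair_sum_right {ι : Type*} (s : Finset ι) (x : Fin 10 → ℤ) (y : ι → Fin 10 → ℤ) :
    epair x (∑ j ∈ s, y j) = ∑ j ∈ s, epair x (y j) := by
  simp only [epair_eq_dotProduct, mulVec_sum, dotProduct_sum]

theorem epair_sum_left {ι : Type*} (s : Finset ι) (x : ι → Fin 10 → ℤ) (y : Fin 10 → ℤ) :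
    epair (∑ j ∈ s, x j) y = ∑ j ∈ s, epair (x j) y := by
  simp only [epair_comm _ y, epair_sum_right]

theorem epair_smul_left (c : ℤ) (x y : Fin 10 → ℤ) : epair (c • x) y = c * epair x y := by
  rw [epair_eq_dotProduct, epair_eq_dotProduct, smul_dotProduct, smul_eq_mul]

theorem epair_smul_right (c : ℤ) (x y : Fin 10 → ℤ) : epair x (c • y) = c * epair x y := by
  rw [epair_comm, epair_smul_left, epair_comm]

theorem of_mulVec_enriquesGram_mulVec {ι : Type*} (E : ι → Fin 10 → ℤ) (y : Fin 10 → ℤ) :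
    of E *ᵥ (enriquesGram *ᵥ y) = fun i => epair (E i) y := by
  funext i
  rw [epair_eq_dotProduct]
  rfl

theorem of_mul_enriquesGram_mul_transpose {ι : Type*} (E : ι → Fin 10 → ℤ) :
    of E * enriquesGram * (of E)ᵀ = of fun i j => epair (E i) (E j) := by
  ext i j
  simp only [mul_apply, transpose_apply, of_apply, epair, Finset.sum_mul]
  exact Finset.sum_comm

namespace IsIsotropicTenSeq

variable {E : Fin 10 → Fin 10 → ℤ}

theorem epair_sum (hE : IsIsotropicTenSeq E) (i : Fin 10) : epair (E i) (∑ j, E j) = 9 := by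
  rw [epair_sum_right, ← Finset.add_sum_erase _ _ (Finset.mem_univ i), hE.1 i, zero_add,
    Finset.sum_congr rfl fun j hj => hE.2 i j (Finset.ne_of_mem_erase hj).symm]
  simp

theorem epair_sum_sum (hE : IsIsotropicTenSeq E) : epair (∑ i, E i) (∑ i, E i) = 90 := by
  rw [epair_sum_left]
  simp [hE.epair_sum]

theorem gram_eq (hE : IsIsotropicTenSeq E) :
    of E * enriquesGram * (of E)ᵀ = of (fun _ _ => 1) - 1 := by
  rw [of_mul_enriquesGram_mul_transpose]
  ext i j
  by_cases h : i = j
  · subst h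
    simp [hE.1]
  · simp [h, hE.2 i j h]

theorem det_eq (hE : IsIsotropicTenSeq E) : (of E).det = 3 ∨ (of E).det = -3 := by
  have hdet := congrArg det hE.gram_eq
  rw [det_mul, det_mul, det_transpose, det_of_fun_one_sub_one] at hdet
  rw [← sq_eq_sq_iff_eq_or_eq_neg]
  rcases Int.isUnit_iff.mp isUnit_det_enriquesGram with hG | hG <;> rw [hG] at hdet <;>
    norm_num at hdet <;> nlinarith [sq_nonneg (of E).det]

theorem three_dvd_enriquesGram_mulVec_sum (hE : IsIsotropicTenSeq E) (i : Fin 10) :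
    3 ∣ (enriquesGram *ᵥ ∑ j, E j) i := by
  have h := dvd_det_mul_of_mulVec_eq (of_mulVec_enriquesGram_mulVec E _) (c := 9)
    (fun i => by rw [hE.epair_sum]) i
  rcases hE.det_eq with hd | hd <;> rw [hd] at h
  · exact (mul_dvd_mul_iff_left three_ne_zero).mp h
  · exact (mul_dvd_mul_iff_left three_ne_zero).mp (by simpa using h)

theorem three_dvd_sum (hE : IsIsotropicTenSeq E) (k : Fin 10) : 3 ∣ (∑ i, E i) k :=
  dvd_of_isUnit_det_of_dvd_mulVec isUnit_det_enriquesGram hE.three_dvd_enriquesGram_mulVec_sum k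

end IsIsotropicTenSeq

/-- The sum of an isotropic 10-sequence in the Enriques lattice is 3-divisible, and any
`D` with `3D = E₁ + ⋯ + E₁₀` satisfies `⟨D,D⟩ = 10` and `⟨D,Eᵢ⟩ = 3` for all `i`. -/
theorem isotropicTenSeq_sum_three_divisible
    (E : Fin 10 → Fin 10 → ℤ) (hE : IsIsotropicTenSeq E) :
    (∃ D : Fin 10 → ℤ, (3 : ℤ) • D = ∑ i, E i) ∧
      ∀ D : Fin 10 → ℤ, (3 : ℤ) • D = ∑ i, E i →
        epair D D = 10 ∧ ∀ i, epair D (E i) = 3 := by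
  refine ⟨⟨fun k => (∑ i, E i) k / 3, funext fun k => ?_⟩, fun D hD => ⟨?_, fun i => ?_⟩⟩
  · simpa using Int.mul_ediv_cancel' (hE.three_dvd_sum k)
  · have h := hE.epair_sum_sum
    rw [← hD, epair_smul_left, epair_smul_right] at h
    linarith
  · have h := hE.epair_sum i
    rw [← hD, epair_comm, epair_smul_left] at h
    linarith
end

section
/- In the fundamental-presentation setting, for all integers a₀,a₁,…,a₇,a₉,a₁₀ the identity 9·⟨L,L⟩ = (φ₁+⋯+φ₁₀)² − 9·(φ₁²+⋯+φ₁₀²) holds, where φᵢ := ⟨Eᵢ,L⟩. (This is Theorem 1.4(d): L² = (1/9)(∑φᵢ)² − ∑φᵢ² for the φ-vector of a polarization on an Enriques surface.) -/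
/-!
If `x = ∑ bᵢ Eᵢ` with `S = ∑ bᵢ`, then `⟨Eₖ, x⟩ = S - bₖ` and `⟨x, x⟩ = S² - ∑ bᵢ²`; summing these
values and their squares over the `n` indices gives
`(∑ₖ ⟨Eₖ, x⟩)² - (n - 1) ∑ₖ ⟨Eₖ, x⟩² = (n - 1) ⟨x, x⟩`.
Both sides are quadratic in `x`, so the identity persists for every `x` with a nonzero multiple
in the span of the `Eᵢ`. For `n = 10` this applies to `L`, since `3 • D = ∑ Eᵢ` puts `3 • L` in
the span.
-/

section IsotropicSequence

variable {M ι : Type*} [AddCommGroup M] [Fintype ι] [DecidableEq ι]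
  (B : M →ₗ[ℤ] M →ₗ[ℤ] ℤ) (E : ι → M)

def IsIsotropicSequence : Prop :=
  ∀ i j, B (E i) (E j) = if i = j then 0 else 1

variable {B E}

theorem IsIsotropicSequence.apply_sum_smul (hE : IsIsotropicSequence B E) (b : ι → ℤ) (k : ι) :
    B (E k) (∑ i, b i • E i) = ∑ i, b i - b k := by
  simp [hE k, Finset.sum_ite, Finset.filter_ne, Finset.sum_erase_eq_sub]

theorem IsIsotropicSequence.apply_self_sum_smul (hE : IsIsotropicSequence B E) (b : ι → ℤ) :
    B (∑ i, b i • E i) (∑ i, b i • E i) = (∑ i, b i) ^ 2 - ∑ i, b i ^ 2 := by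
  rw [map_sum B]
  simp only [LinearMap.sum_apply, map_smul, LinearMap.smul_apply, hE.apply_sum_smul,
    smul_eq_mul, mul_sub, Finset.sum_sub_distrib, ← Finset.sum_mul, ← sq]

theorem IsIsotropicSequence.sq_sum_apply_sub_of_mem_span (hE : IsIsotropicSequence B E) {x : M}
    (hx : x ∈ Submodule.span ℤ (Set.range E)) :
    (∑ k, B (E k) x) ^ 2 - (Fintype.card ι - 1) * ∑ k, B (E k) x ^ 2 =
      (Fintype.card ι - 1) * B x x := by
  obtain ⟨b, rfl⟩ := (Submodule.mem_span_range_iff_exists_fun ℤ).mp hx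
  simp only [hE.apply_self_sum_smul, hE.apply_sum_smul, Finset.sum_sub_distrib, sub_sq,
    Finset.sum_add_distrib, ← Finset.mul_sum, Finset.sum_const, Finset.card_univ, nsmul_eq_mul]
  ring

theorem IsIsotropicSequence.sq_sum_apply_sub_of_smul_mem_span (hE : IsIsotropicSequence B E)
    {x : M} {m : ℤ} (hm : m ≠ 0) (hx : m • x ∈ Submodule.span ℤ (Set.range E)) :
    (∑ k, B (E k) x) ^ 2 - (Fintype.card ι - 1) * ∑ k, B (E k) x ^ 2 =
      (Fintype.card ι - 1) * B x x := by
  have h := hE.sq_sum_apply_sub_of_mem_span hx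
  simp only [map_smul, LinearMap.smul_apply, smul_eq_mul, ← Finset.mul_sum, mul_pow] at h
  refine mul_left_cancel₀ (pow_ne_zero 2 hm) ?_
  linear_combination h

end IsotropicSequence

theorem phi_vector_square_identity_general {M : Type*} [AddCommGroup M]
    (B : M →ₗ[ℤ] M →ₗ[ℤ] ℤ)
    (E : Fin 10 → M)
    (hE0 : ∀ i, B (E i) (E i) = 0)
    (hE1 : ∀ i j, i ≠ j → B (E i) (E j) = 1)
    (D : M) (hD : (3 : ℤ) • D = ∑ i, E i)
    (a0 a1 a2 a3 a4 a5 a6 a7 a9 a10 : ℤ)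
    (L : M)
    (hL : L = a1 • E 0 + a2 • E 1 + a3 • E 2 + a4 • E 3 + a5 • E 4 +
              a6 • E 5 + a7 • E 6 + a9 • E 8 + a10 • E 9 +
              a0 • (D - E 8 - E 9)) :
    9 * B L L = (∑ i, B (E i) L) ^ 2 - 9 * ∑ i, (B (E i) L) ^ 2 := by
  have hE : IsIsotropicSequence B E := fun i j => by
    split_ifs with h
    · exact h ▸ hE0 i
    · exact hE1 i j h
  have hmem : ∀ i, E i ∈ Submodule.span ℤ (Set.range E) := fun i => Submodule.subset_span ⟨i, rfl⟩
  have h3D : (3 : ℤ) • D ∈ Submodule.span ℤ (Set.range E) :=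
    hD ▸ Submodule.sum_mem _ fun i _ => hmem i
  have h3L : (3 : ℤ) • L ∈ Submodule.span ℤ (Set.range E) := by
    have h3L_eq : (3 : ℤ) • L =
        (3 * a1) • E 0 + (3 * a2) • E 1 + (3 * a3) • E 2 + (3 * a4) • E 3 + (3 * a5) • E 4 +
        (3 * a6) • E 5 + (3 * a7) • E 6 + (3 * a9) • E 8 + (3 * a10) • E 9 +
        a0 • ((3 : ℤ) • D) - (3 * a0) • E 8 - (3 * a0) • E 9 := by
      rw [hL]; module
    rw [h3L_eq]
    repeat' first
      | exact h3D | exact hmem _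
      | apply add_mem | apply sub_mem | apply Submodule.smul_mem
  have h := hE.sq_sum_apply_sub_of_smul_mem_span three_ne_zero h3L
  norm_num at h
  linear_combination -h

theorem phi_vector_square_identity {M : Type*} [AddCommGroup M]
    (B : M →ₗ[ℤ] M →ₗ[ℤ] ℤ) (hsymm : ∀ x y : M, B x y = B y x)
    (E : Fin 10 → M)
    (hE0 : ∀ i, B (E i) (E i) = 0)
    (hE1 : ∀ i j, i ≠ j → B (E i) (E j) = 1)
    (D : M) (hD : (3 : ℤ) • D = ∑ i, E i)
    (a0 a1 a2 a3 a4 a5 a6 a7 a9 a10 : ℤ)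
    (L : M)
    (hL : L = a1 • E 0 + a2 • E 1 + a3 • E 2 + a4 • E 3 + a5 • E 4 +
              a6 • E 5 + a7 • E 6 + a9 • E 8 + a10 • E 9 +
              a0 • (D - E 8 - E 9)) :
    9 * B L L = (∑ i, B (E i) L) ^ 2 - 9 * ∑ i, (B (E i) L) ^ 2 :=
  phi_vector_square_identity_general B E hE0 hE1 D hD a0 a1 a2 a3 a4 a5 a6 a7 a9 a10 L hL
end

section
/- In the fundamental-presentation setting, the coefficients can be recovered from the intersection numbers φᵢ := ⟨Eᵢ,L⟩ via: aᵢ = φ₈ − φᵢ for i ∈ {1,…,7}; 3·a₉ = (φ₁+⋯+φ₁₀) − 6φ₈ − 3φ₉; 3·a₁₀ = (φ₁+⋯+φ₁₀) − 6φ₈ − 3φ₁₀; and 3·a₀ = (φ₁+⋯+φ₁₀) − 9φ₈. In particular, for a fixed isotropic 10-sequence and fixed D, the coefficients a₀,a₁,…,a₇,a₉,a₁₀ are uniquely determined by L. (This is the coefficient formula of Proposition 5.4 and the uniqueness part of Theorem 5.6.) -/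
/-!
Expanding `E₉,₁₀ = D − E₉ − E₁₀` writes `L = ∑ cⱼ Eⱼ + a₀ D`. Since `⟨Eᵢ, Eⱼ⟩ = 1 − δᵢⱼ` and
`3 ⟨Eᵢ, D⟩ = ⟨Eᵢ, ∑ Eⱼ⟩ = 9`, every intersection number has the shape `φᵢ = ∑ cⱼ − cᵢ + 3 a₀`.
The coefficient of `E₈` is zero, so `φ₈ − φᵢ = cᵢ`, and `∑ φᵢ = 9 ∑ cⱼ + 30 a₀` recovers `a₀`;
the recovery formulas then force uniqueness.
-/

open Finset

section IsotropicSequence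

variable {M ι : Type*} [AddCommGroup M] [Fintype ι] [DecidableEq ι]
  (B : M →ₗ[ℤ] M →ₗ[ℤ] ℤ) {E : ι → M}

theorem pairing_isotropic_sum (hE0 : ∀ i, B (E i) (E i) = 0)
    (hE1 : ∀ i j, i ≠ j → B (E i) (E j) = 1) (c : ι → ℤ) (i : ι) :
    B (E i) (∑ j, c j • E j) = (∑ j, c j) - c i := by
  have hpair : ∀ j, B (E i) (c j • E j) = c j - if i = j then c j else 0 := by
    intro j
    by_cases h : i = j
    · subst h; simp [hE0]
    · simp [h, hE1 i j h]
  simp only [map_sum, hpair, sum_sub_distrib, sum_ite_eq, mem_univ, if_true]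

theorem pairing_of_smul_eq_sum (hE0 : ∀ i, B (E i) (E i) = 0)
    (hE1 : ∀ i j, i ≠ j → B (E i) (E j) = 1) {n : ℤ} {D : M} (hD : n • D = ∑ j, E j)
    (i : ι) : n * B (E i) D = Fintype.card ι - 1 := by
  have h := pairing_isotropic_sum B hE0 hE1 (fun _ => 1) i
  simp only [one_smul, sum_const, card_univ, nsmul_eq_mul, mul_one] at h
  rw [← h, ← hD, map_zsmul, smul_eq_mul]

end IsotropicSequence

/-- The coefficients of `L` on `E₁, …, E₁₀` (indices shifted to `Fin 10`) once
`E₉,₁₀ = D − E₉ − E₁₀` is expanded; the remaining summand is `a₀ • D`. -/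
def fundamentalCoeffs (a0 a1 a2 a3 a4 a5 a6 a7 a9 a10 : ℤ) : Fin 10 → ℤ :=
  ![a1, a2, a3, a4, a5, a6, a7, 0, a9 - a0, a10 - a0]

theorem fundamental_presentation_eq_sum {M : Type*} [AddCommGroup M] (E : Fin 10 → M) (D : M)
    (a0 a1 a2 a3 a4 a5 a6 a7 a9 a10 : ℤ) :
    a1 • E 0 + a2 • E 1 + a3 • E 2 + a4 • E 3 + a5 • E 4 + a6 • E 5 + a7 • E 6 +
        a9 • E 8 + a10 • E 9 + a0 • (D - E 8 - E 9) =
      ∑ j, fundamentalCoeffs a0 a1 a2 a3 a4 a5 a6 a7 a9 a10 j • E j + a0 • D := by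
  simp only [fundamentalCoeffs, Fin.sum_univ_succ, Fin.sum_univ_zero, Matrix.cons_val_zero,
    Fin.succ_zero_eq_one, Matrix.cons_val_one, Fin.succ_one_eq_two, Matrix.cons_val, Fin.reduceSucc]
  module

theorem pairing_fundamental_presentation {M : Type*} [AddCommGroup M]
    (B : M →ₗ[ℤ] M →ₗ[ℤ] ℤ) (E : Fin 10 → M)
    (hE0 : ∀ i, B (E i) (E i) = 0) (hE1 : ∀ i j, i ≠ j → B (E i) (E j) = 1)
    (D : M) (hD : (3 : ℤ) • D = ∑ i, E i) (a0 a1 a2 a3 a4 a5 a6 a7 a9 a10 : ℤ) (i : Fin 10) :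
    B (E i) (a1 • E 0 + a2 • E 1 + a3 • E 2 + a4 • E 3 + a5 • E 4 + a6 • E 5 + a7 • E 6 +
        a9 • E 8 + a10 • E 9 + a0 • (D - E 8 - E 9)) =
      (∑ j, fundamentalCoeffs a0 a1 a2 a3 a4 a5 a6 a7 a9 a10 j) -
        fundamentalCoeffs a0 a1 a2 a3 a4 a5 a6 a7 a9 a10 i + 3 * a0 := by
  have hED : B (E i) D = 3 := by
    have h := pairing_of_smul_eq_sum B hE0 hE1 hD i
    simp only [Fintype.card_fin] at h
    omega
  rw [fundamental_presentation_eq_sum, map_add, pairing_isotropic_sum B hE0 hE1, map_zsmul,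
    hED, smul_eq_mul, mul_comm]

theorem fundamental_coefficients_of_pairing (a0 a1 a2 a3 a4 a5 a6 a7 a9 a10 : ℤ)
    (φ : Fin 10 → ℤ) (hφ : ∀ i, φ i = (∑ j, fundamentalCoeffs a0 a1 a2 a3 a4 a5 a6 a7 a9 a10 j) -
      fundamentalCoeffs a0 a1 a2 a3 a4 a5 a6 a7 a9 a10 i + 3 * a0) :
    a1 = φ 7 - φ 0 ∧ a2 = φ 7 - φ 1 ∧ a3 = φ 7 - φ 2 ∧ a4 = φ 7 - φ 3 ∧ a5 = φ 7 - φ 4 ∧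
      a6 = φ 7 - φ 5 ∧ a7 = φ 7 - φ 6 ∧
      3 * a9 = (∑ i, φ i) - 6 * φ 7 - 3 * φ 8 ∧
      3 * a10 = (∑ i, φ i) - 6 * φ 7 - 3 * φ 9 ∧
      3 * a0 = (∑ i, φ i) - 9 * φ 7 := by
  refine ⟨?_, ?_, ?_, ?_, ?_, ?_, ?_, ?_, ?_, ?_⟩ <;>
    simp [hφ, fundamentalCoeffs, Fin.sum_univ_succ] <;> ring

theorem fundamental_coefficients_recovered_and_unique_general {M : Type*} [AddCommGroup M]
    (B : M →ₗ[ℤ] M →ₗ[ℤ] ℤ)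
    (E : Fin 10 → M)
    (hE0 : ∀ i, B (E i) (E i) = 0)
    (hE1 : ∀ i j, i ≠ j → B (E i) (E j) = 1)
    (D : M) (hD : (3 : ℤ) • D = ∑ i, E i)
    (a0 a1 a2 a3 a4 a5 a6 a7 a9 a10 : ℤ)
    (L : M)
    (hL : L = a1 • E 0 + a2 • E 1 + a3 • E 2 + a4 • E 3 + a5 • E 4 +
              a6 • E 5 + a7 • E 6 + a9 • E 8 + a10 • E 9 +
              a0 • (D - E 8 - E 9)) :
    (a1 = B (E 7) L - B (E 0) L ∧
     a2 = B (E 7) L - B (E 1) L ∧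
     a3 = B (E 7) L - B (E 2) L ∧
     a4 = B (E 7) L - B (E 3) L ∧
     a5 = B (E 7) L - B (E 4) L ∧
     a6 = B (E 7) L - B (E 5) L ∧
     a7 = B (E 7) L - B (E 6) L ∧
     3 * a9 = (∑ i, B (E i) L) - 6 * B (E 7) L - 3 * B (E 8) L ∧
     3 * a10 = (∑ i, B (E i) L) - 6 * B (E 7) L - 3 * B (E 9) L ∧
     3 * a0 = (∑ i, B (E i) L) - 9 * B (E 7) L) ∧
    (∀ b0 b1 b2 b3 b4 b5 b6 b7 b9 b10 : ℤ,
      L = b1 • E 0 + b2 • E 1 + b3 • E 2 + b4 • E 3 + b5 • E 4 +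
          b6 • E 5 + b7 • E 6 + b9 • E 8 + b10 • E 9 +
          b0 • (D - E 8 - E 9) →
      b0 = a0 ∧ b1 = a1 ∧ b2 = a2 ∧ b3 = a3 ∧ b4 = a4 ∧ b5 = a5 ∧
        b6 = a6 ∧ b7 = a7 ∧ b9 = a9 ∧ b10 = a10) := by
  have recover := fun b0 b1 b2 b3 b4 b5 b6 b7 b9 b10 (hLb : L = _) =>
    fundamental_coefficients_of_pairing b0 b1 b2 b3 b4 b5 b6 b7 b9 b10 (fun i => B (E i) L)
      fun i => hLb ▸ pairing_fundamental_presentation B E hE0 hE1 D hD b0 b1 b2 b3 b4 b5 b6 b7 b9 b10 i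
  refine ⟨recover a0 a1 a2 a3 a4 a5 a6 a7 a9 a10 hL, ?_⟩
  intro b0 b1 b2 b3 b4 b5 b6 b7 b9 b10 hLb
  obtain ⟨ha1, ha2, ha3, ha4, ha5, ha6, ha7, ha9, ha10, ha0⟩ :=
    recover a0 a1 a2 a3 a4 a5 a6 a7 a9 a10 hL
  obtain ⟨hb1, hb2, hb3, hb4, hb5, hb6, hb7, hb9, hb10, hb0⟩ :=
    recover b0 b1 b2 b3 b4 b5 b6 b7 b9 b10 hLb
  refine ⟨?_, ?_, ?_, ?_, ?_, ?_, ?_, ?_, ?_, ?_⟩ <;> omega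

theorem fundamental_coefficients_recovered_and_unique {M : Type*} [AddCommGroup M]
    (B : M →ₗ[ℤ] M →ₗ[ℤ] ℤ) (hsymm : ∀ x y : M, B x y = B y x)
    (E : Fin 10 → M)
    (hE0 : ∀ i, B (E i) (E i) = 0)
    (hE1 : ∀ i j, i ≠ j → B (E i) (E j) = 1)
    (D : M) (hD : (3 : ℤ) • D = ∑ i, E i)
    (a0 a1 a2 a3 a4 a5 a6 a7 a9 a10 : ℤ)
    (L : M)
    (hL : L = a1 • E 0 + a2 • E 1 + a3 • E 2 + a4 • E 3 + a5 • E 4 +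
              a6 • E 5 + a7 • E 6 + a9 • E 8 + a10 • E 9 +
              a0 • (D - E 8 - E 9)) :
    (a1 = B (E 7) L - B (E 0) L ∧
     a2 = B (E 7) L - B (E 1) L ∧
     a3 = B (E 7) L - B (E 2) L ∧
     a4 = B (E 7) L - B (E 3) L ∧
     a5 = B (E 7) L - B (E 4) L ∧
     a6 = B (E 7) L - B (E 5) L ∧
     a7 = B (E 7) L - B (E 6) L ∧
     3 * a9 = (∑ i, B (E i) L) - 6 * B (E 7) L - 3 * B (E 8) L ∧
     3 * a10 = (∑ i, B (E i) L) - 6 * B (E 7) L - 3 * B (E 9) L ∧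
     3 * a0 = (∑ i, B (E i) L) - 9 * B (E 7) L) ∧
    (∀ b0 b1 b2 b3 b4 b5 b6 b7 b9 b10 : ℤ,
      L = b1 • E 0 + b2 • E 1 + b3 • E 2 + b4 • E 3 + b5 • E 4 +
          b6 • E 5 + b7 • E 6 + b9 • E 8 + b10 • E 9 +
          b0 • (D - E 8 - E 9) →
      b0 = a0 ∧ b1 = a1 ∧ b2 = a2 ∧ b3 = a3 ∧ b4 = a4 ∧ b5 = a5 ∧
        b6 = a6 ∧ b7 = a7 ∧ b9 = a9 ∧ b10 = a10) :=
  fundamental_coefficients_recovered_and_unique_general B E hE0 hE1 D hD a0 a1 a2 a3 a4 a5 a6 a7 a9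
    a10 L hL
end

section
/- In the fundamental-presentation setting with nonnegative integer coefficients: (1) if a₁ ≥ a₂ ≥ ⋯ ≥ a₇ ≥ 0 and a₀ ≥ a₉ ≥ a₁₀ ≥ 0, then φ₁ ≤ φ₂ ≤ ⋯ ≤ φ₁₀; and (2) for arbitrary integer coefficients the identity (φ₁+⋯+φ₇) − 2(φ₈+φ₉+φ₁₀) = 3(a₉+a₁₀−a₀) holds, so that φ₁+⋯+φ₇ ≥ 2(φ₈+φ₉+φ₁₀) if and only if a₉+a₁₀ ≥ a₀. (This establishes parts (a) and (c) of Theorem 1.4 for the φ-vector of a fundamental presentation.) -/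
/-!
Against an isotropic sequence, pairing with `∑ j, c j • E j` gives `(∑ j, c j) - c i`, and
`3 • D = ∑ j, E j` gives `⟨E i, D⟩ = 3`. Rewriting `L = ∑ j, c j • E j + a₀ • D` with
`c = (a₁, …, a₇, 0, a₉ - a₀, a₁₀ - a₀)` thus gives `φ i = K - c i` for a constant `K`: the
φ-vector is increasing exactly where `c` is decreasing, and the identity is linear arithmetic.
-/

section IsotropicSequence

variable {M : Type*} [AddCommGroup M] (B : M →ₗ[ℤ] M →ₗ[ℤ] ℤ) {n : ℕ} {E : Fin n → M}

theorem apply_sum_smul_of_isotropic (hE0 : ∀ i, B (E i) (E i) = 0)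
    (hE1 : ∀ i j, i ≠ j → B (E i) (E j) = 1) (c : Fin n → ℤ) (i : Fin n) :
    B (E i) (∑ j, c j • E j) = (∑ j, c j) - c i := by
  have hdefect : ∀ j, c j - c j * B (E i) (E j) = if i = j then c i else 0 := by
    intro j
    by_cases h : i = j
    · subst h; simp [hE0]
    · simp [h, hE1 i j h]
  have hsum : ∑ j, (c j - c j * B (E i) (E j)) = c i := by
    simp only [hdefect, Finset.sum_ite_eq, Finset.mem_univ, if_true]
  simp only [map_sum, map_smul, smul_eq_mul]
  rw [Finset.sum_sub_distrib] at hsum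
  linarith

theorem three_mul_apply_of_three_smul_eq_sum (hE0 : ∀ i, B (E i) (E i) = 0)
    (hE1 : ∀ i j, i ≠ j → B (E i) (E j) = 1) {D : M} (hD : (3 : ℤ) • D = ∑ i, E i)
    (i : Fin n) : 3 * B (E i) D = n - 1 := by
  have h := apply_sum_smul_of_isotropic B hE0 hE1 1 i
  simp only [Pi.one_apply, one_smul, Finset.sum_const, Finset.card_univ, Fintype.card_fin,
    nsmul_eq_mul, mul_one] at h
  rw [← h, ← hD, map_smul, smul_eq_mul]

end IsotropicSequence

theorem phi_vector_monotone_and_linear_identity_general {M : Type*} [AddCommGroup M]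
    (B : M →ₗ[ℤ] M →ₗ[ℤ] ℤ)
    (E : Fin 10 → M)
    (hE0 : ∀ i, B (E i) (E i) = 0)
    (hE1 : ∀ i j, i ≠ j → B (E i) (E j) = 1)
    (D : M) (hD : (3 : ℤ) • D = ∑ i, E i)
    (a0 a1 a2 a3 a4 a5 a6 a7 a9 a10 : ℤ)
    (L : M)
    (hL : L = a1 • E 0 + a2 • E 1 + a3 • E 2 + a4 • E 3 + a5 • E 4 +
              a6 • E 5 + a7 • E 6 + a9 • E 8 + a10 • E 9 +
              a0 • (D - E 8 - E 9)) :
    ((a1 ≥ a2 ∧ a2 ≥ a3 ∧ a3 ≥ a4 ∧ a4 ≥ a5 ∧ a5 ≥ a6 ∧ a6 ≥ a7 ∧ 0 ≤ a7 ∧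
      a0 ≥ a9 ∧ a9 ≥ a10 ∧ 0 ≤ a10 →
      B (E 0) L ≤ B (E 1) L ∧ B (E 1) L ≤ B (E 2) L ∧ B (E 2) L ≤ B (E 3) L ∧
      B (E 3) L ≤ B (E 4) L ∧ B (E 4) L ≤ B (E 5) L ∧ B (E 5) L ≤ B (E 6) L ∧
      B (E 6) L ≤ B (E 7) L ∧ B (E 7) L ≤ B (E 8) L ∧ B (E 8) L ≤ B (E 9) L) ∧
     ((B (E 0) L + B (E 1) L + B (E 2) L + B (E 3) L + B (E 4) L + B (E 5) L +
        B (E 6) L) - 2 * (B (E 7) L + B (E 8) L + B (E 9) L)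
          = 3 * (a9 + a10 - a0)) ∧
     (B (E 0) L + B (E 1) L + B (E 2) L + B (E 3) L + B (E 4) L + B (E 5) L +
        B (E 6) L ≥ 2 * (B (E 7) L + B (E 8) L + B (E 9) L) ↔
          a9 + a10 ≥ a0)) := by
  set c : Fin 10 → ℤ := ![a1, a2, a3, a4, a5, a6, a7, 0, a9 - a0, a10 - a0] with hc
  have hLc : L = ∑ j, c j • E j + a0 • D := by
    simp [hL, hc, Fin.sum_univ_succ]
    module
  have hφ : ∀ i, B (E i) L = (∑ j, c j) + 3 * a0 - c i := by
    intro i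
    have hDi : B (E i) D = 3 := by
      have := three_mul_apply_of_three_smul_eq_sum B hE0 hE1 hD i
      push_cast at this
      omega
    rw [hLc, map_add, apply_sum_smul_of_isotropic B hE0 hE1, map_smul, hDi, smul_eq_mul]
    ring
  simp [hφ, hc, Fin.sum_univ_succ]
  omega

theorem phi_vector_monotone_and_linear_identity {M : Type*} [AddCommGroup M]
    (B : M →ₗ[ℤ] M →ₗ[ℤ] ℤ) (hsymm : ∀ x y : M, B x y = B y x)
    (E : Fin 10 → M)
    (hE0 : ∀ i, B (E i) (E i) = 0)
    (hE1 : ∀ i j, i ≠ j → B (E i) (E j) = 1)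
    (D : M) (hD : (3 : ℤ) • D = ∑ i, E i)
    (a0 a1 a2 a3 a4 a5 a6 a7 a9 a10 : ℤ)
    (L : M)
    (hL : L = a1 • E 0 + a2 • E 1 + a3 • E 2 + a4 • E 3 + a5 • E 4 +
              a6 • E 5 + a7 • E 6 + a9 • E 8 + a10 • E 9 +
              a0 • (D - E 8 - E 9)) :
    ((a1 ≥ a2 ∧ a2 ≥ a3 ∧ a3 ≥ a4 ∧ a4 ≥ a5 ∧ a5 ≥ a6 ∧ a6 ≥ a7 ∧ 0 ≤ a7 ∧
      a0 ≥ a9 ∧ a9 ≥ a10 ∧ 0 ≤ a10 →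
      B (E 0) L ≤ B (E 1) L ∧ B (E 1) L ≤ B (E 2) L ∧ B (E 2) L ≤ B (E 3) L ∧
      B (E 3) L ≤ B (E 4) L ∧ B (E 4) L ≤ B (E 5) L ∧ B (E 5) L ≤ B (E 6) L ∧
      B (E 6) L ≤ B (E 7) L ∧ B (E 7) L ≤ B (E 8) L ∧ B (E 8) L ≤ B (E 9) L) ∧
     ((B (E 0) L + B (E 1) L + B (E 2) L + B (E 3) L + B (E 4) L + B (E 5) L +
        B (E 6) L) - 2 * (B (E 7) L + B (E 8) L + B (E 9) L)
          = 3 * (a9 + a10 - a0)) ∧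
     (B (E 0) L + B (E 1) L + B (E 2) L + B (E 3) L + B (E 4) L + B (E 5) L +
        B (E 6) L ≥ 2 * (B (E 7) L + B (E 8) L + B (E 9) L) ↔
          a9 + a10 ≥ a0)) :=
  phi_vector_monotone_and_linear_identity_general B E hE0 hE1 D hD a0 a1 a2 a3 a4 a5 a6 a7 a9 a10 L
    hL
end

section
/- Let a₀,a₁,…,a₇,a₉,a₁₀ be nonnegative integers with a₁ ≥ a₂ ≥ ⋯ ≥ a₇ and a₉+a₁₀ ≥ a₀ ≥ a₉ ≥ a₁₀, and suppose they are not all even. Then there exist nonnegative integers b₀,b₁,…,b₇,b₉,b₁₀ with b₀ = a₀, {b₁,b₂} = {a₁,a₂} as multisets, bᵢ = aᵢ for i ∈ {3,…,7}, and {b₉,b₁₀} = {a₉,a₁₀} as multisets, such that one of the following holds: (i) b₀ is odd and b₉ is even; (ii) b₀ is even and nonzero and b₉ is odd; (iii) b₀, b₉, b₁₀ are all odd and b₁ is even; (iv) bᵢ is odd for some i ∈ {2,…,7}. (This is the parity case analysis proved in Lemma 4.1 of the paper.) -/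
/-!
If one of `a₁, …, a₇` is odd, condition (iv) holds once an odd `a₁` is moved into the second
slot. Otherwise one of `a₀, a₉, a₁₀` is odd and `b₁ = a₁` is even; ordering `a₉, a₁₀` so that
`b₉` has the parity needed gives (i), (ii) or (iii). In case (ii), `a₀ ≠ 0` because
`a₀ ≥ a₉ ≥ a₁₀ ≥ 0` and `b₉` is odd.
-/

def IsPermOfPair (u v x y : ℤ) : Prop := (u = x ∧ v = y) ∨ (u = y ∧ v = x)

/-- Conditions (i)–(iv) of Proposition 3.13. -/
def ParityConditions (b0 b1 b2 b3 b4 b5 b6 b7 b9 b10 : ℤ) : Prop :=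
  (Odd b0 ∧ Even b9) ∨
  (Even b0 ∧ b0 ≠ 0 ∧ Odd b9) ∨
  (Odd b0 ∧ Odd b9 ∧ Odd b10 ∧ Even b1) ∨
  (Odd b2 ∨ Odd b3 ∨ Odd b4 ∨ Odd b5 ∨ Odd b6 ∨ Odd b7)

theorem IsPermOfPair.nonneg {u v x y : ℤ} (h : IsPermOfPair u v x y) (hx : 0 ≤ x) (hy : 0 ≤ y) :
    0 ≤ u ∧ 0 ≤ v := by
  rcases h with ⟨rfl, rfl⟩ | ⟨rfl, rfl⟩ <;> exact ⟨‹_›, ‹_›⟩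

theorem ne_zero_of_odd_of_le {a b : ℤ} (hb : 0 ≤ b) (hodd : Odd b) (hle : b ≤ a) : a ≠ 0 := by
  obtain ⟨k, rfl⟩ := hodd
  omega

theorem exists_isPermOfPair_odd_of_odd {a1 a2 a3 a4 a5 a6 a7 : ℤ}
    (h : Odd a1 ∨ Odd a2 ∨ Odd a3 ∨ Odd a4 ∨ Odd a5 ∨ Odd a6 ∨ Odd a7) :
    ∃ b1 b2, IsPermOfPair b1 b2 a1 a2 ∧
      (Odd b2 ∨ Odd a3 ∨ Odd a4 ∨ Odd a5 ∨ Odd a6 ∨ Odd a7) := by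
  rcases h with h1 | h
  · exact ⟨a2, a1, .inr ⟨rfl, rfl⟩, .inl h1⟩
  · exact ⟨a1, a2, .inl ⟨rfl, rfl⟩, h⟩

theorem exists_isPermOfPair_of_not_even {a0 a9 a10 : ℤ}
    (h10 : 0 ≤ a10) (h90 : a0 ≥ a9) (h109 : a9 ≥ a10) (h : ¬(Even a0 ∧ Even a9 ∧ Even a10)) :
    ∃ b9 b10, IsPermOfPair b9 b10 a9 a10 ∧
      ((Odd a0 ∧ Even b9) ∨ (Even a0 ∧ a0 ≠ 0 ∧ Odd b9) ∨ (Odd a0 ∧ Odd b9 ∧ Odd b10)) := by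
  have keep : IsPermOfPair a9 a10 a9 a10 := .inl ⟨rfl, rfl⟩
  have swap : IsPermOfPair a10 a9 a9 a10 := .inr ⟨rfl, rfl⟩
  rcases Int.even_or_odd a0 with e0 | o0 <;> rcases Int.even_or_odd a9 with e9 | o9
  · have o10 : Odd a10 := Int.not_even_iff_odd.mp fun e10 => h ⟨e0, e9, e10⟩
    exact ⟨a10, a9, swap, .inr (.inl ⟨e0, ne_zero_of_odd_of_le h10 o10 (h109.trans h90), o10⟩)⟩
  · exact ⟨a9, a10, keep,
      .inr (.inl ⟨e0, ne_zero_of_odd_of_le (h10.trans h109) o9 h90, o9⟩)⟩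
  · exact ⟨a9, a10, keep, .inl ⟨o0, e9⟩⟩
  · rcases Int.even_or_odd a10 with e10 | o10
    · exact ⟨a10, a9, swap, .inl ⟨o0, e10⟩⟩
    · exact ⟨a9, a10, keep, .inr (.inr ⟨o0, o9, o10⟩)⟩

theorem parity_case_analysis_of_fundamental_coefficients_general
    (a0 a1 a2 a3 a4 a5 a6 a7 a9 a10 : ℤ)
    (h0 : 0 ≤ a0) (h1 : 0 ≤ a1) (h2 : 0 ≤ a2) (h3 : 0 ≤ a3) (h4 : 0 ≤ a4)
    (h5 : 0 ≤ a5) (h6 : 0 ≤ a6) (h7 : 0 ≤ a7) (h9 : 0 ≤ a9) (h10 : 0 ≤ a10)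
    (hB : a0 ≥ a9) (hC : a9 ≥ a10)
    (hodd : ¬(Even a0 ∧ Even a1 ∧ Even a2 ∧ Even a3 ∧ Even a4 ∧ Even a5 ∧
      Even a6 ∧ Even a7 ∧ Even a9 ∧ Even a10)) :
    ∃ b0 b1 b2 b3 b4 b5 b6 b7 b9 b10 : ℤ,
      0 ≤ b0 ∧ 0 ≤ b1 ∧ 0 ≤ b2 ∧ 0 ≤ b3 ∧ 0 ≤ b4 ∧ 0 ≤ b5 ∧ 0 ≤ b6 ∧
      0 ≤ b7 ∧ 0 ≤ b9 ∧ 0 ≤ b10 ∧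
      b0 = a0 ∧
      ((b1 = a1 ∧ b2 = a2) ∨ (b1 = a2 ∧ b2 = a1)) ∧
      b3 = a3 ∧ b4 = a4 ∧ b5 = a5 ∧ b6 = a6 ∧ b7 = a7 ∧
      ((b9 = a9 ∧ b10 = a10) ∨ (b9 = a10 ∧ b10 = a9)) ∧
      ((Odd b0 ∧ Even b9) ∨
       (Even b0 ∧ b0 ≠ 0 ∧ Odd b9) ∨
       (Odd b0 ∧ Odd b9 ∧ Odd b10 ∧ Even b1) ∨
       (Odd b2 ∨ Odd b3 ∨ Odd b4 ∨ Odd b5 ∨ Odd b6 ∨ Odd b7)) := by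
  suffices ∃ b1 b2 b9 b10, IsPermOfPair b1 b2 a1 a2 ∧ IsPermOfPair b9 b10 a9 a10 ∧
      ParityConditions a0 b1 b2 a3 a4 a5 a6 a7 b9 b10 by
    obtain ⟨b1, b2, b9, b10, h12, h910, hpar⟩ := this
    obtain ⟨hb1, hb2⟩ := h12.nonneg h1 h2
    obtain ⟨hb9, hb10⟩ := h910.nonneg h9 h10
    exact ⟨a0, b1, b2, a3, a4, a5, a6, a7, b9, b10, h0, hb1, hb2, h3, h4, h5, h6, h7, hb9, hb10,
      rfl, h12, rfl, rfl, rfl, rfl, rfl, h910, hpar⟩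
  by_cases hlow : Odd a1 ∨ Odd a2 ∨ Odd a3 ∨ Odd a4 ∨ Odd a5 ∨ Odd a6 ∨ Odd a7
  · obtain ⟨b1, b2, h12, hpar⟩ := exists_isPermOfPair_odd_of_odd hlow
    exact ⟨b1, b2, a9, a10, h12, .inl ⟨rfl, rfl⟩, .inr (.inr (.inr hpar))⟩
  · simp only [not_or, Int.not_odd_iff_even] at hlow
    obtain ⟨e1, e2, e3, e4, e5, e6, e7⟩ := hlow
    obtain ⟨b9, b10, h910, hpar⟩ := exists_isPermOfPair_of_not_even h10 hB hC
      fun ⟨e0, e9, e10⟩ => hodd ⟨e0, e1, e2, e3, e4, e5, e6, e7, e9, e10⟩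
    refine ⟨a1, a2, b9, b10, .inl ⟨rfl, rfl⟩, h910, ?_⟩
    rcases hpar with hi | hii | ⟨o0, o9, o10⟩
    exacts [.inl hi, .inr (.inl hii), .inr (.inr (.inl ⟨o0, o9, o10, e1⟩))]

/-- Parity case analysis of Lemma 4.1: if the fundamental coefficients are not all even,
then after possibly swapping `a₁ ↔ a₂` and `a₉ ↔ a₁₀` one of the parity conditions
(i)–(iv) of Proposition 3.13 holds. -/
theorem parity_case_analysis_of_fundamental_coefficients
    (a0 a1 a2 a3 a4 a5 a6 a7 a9 a10 : ℤ)
    (h0 : 0 ≤ a0) (h1 : 0 ≤ a1) (h2 : 0 ≤ a2) (h3 : 0 ≤ a3) (h4 : 0 ≤ a4)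
    (h5 : 0 ≤ a5) (h6 : 0 ≤ a6) (h7 : 0 ≤ a7) (h9 : 0 ≤ a9) (h10 : 0 ≤ a10)
    (h12 : a1 ≥ a2) (h23 : a2 ≥ a3) (h34 : a3 ≥ a4) (h45 : a4 ≥ a5)
    (h56 : a5 ≥ a6) (h67 : a6 ≥ a7)
    (hA : a9 + a10 ≥ a0) (hB : a0 ≥ a9) (hC : a9 ≥ a10)
    (hodd : ¬(Even a0 ∧ Even a1 ∧ Even a2 ∧ Even a3 ∧ Even a4 ∧ Even a5 ∧
      Even a6 ∧ Even a7 ∧ Even a9 ∧ Even a10)) :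
    ∃ b0 b1 b2 b3 b4 b5 b6 b7 b9 b10 : ℤ,
      0 ≤ b0 ∧ 0 ≤ b1 ∧ 0 ≤ b2 ∧ 0 ≤ b3 ∧ 0 ≤ b4 ∧ 0 ≤ b5 ∧ 0 ≤ b6 ∧
      0 ≤ b7 ∧ 0 ≤ b9 ∧ 0 ≤ b10 ∧
      b0 = a0 ∧
      ((b1 = a1 ∧ b2 = a2) ∨ (b1 = a2 ∧ b2 = a1)) ∧
      b3 = a3 ∧ b4 = a4 ∧ b5 = a5 ∧ b6 = a6 ∧ b7 = a7 ∧
      ((b9 = a9 ∧ b10 = a10) ∨ (b9 = a10 ∧ b10 = a9)) ∧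
      ((Odd b0 ∧ Even b9) ∨
       (Even b0 ∧ b0 ≠ 0 ∧ Odd b9) ∨
       (Odd b0 ∧ Odd b9 ∧ Odd b10 ∧ Even b1) ∨
       (Odd b2 ∨ Odd b3 ∨ Odd b4 ∨ Odd b5 ∨ Odd b6 ∨ Odd b7)) :=
  parity_case_analysis_of_fundamental_coefficients_general a0 a1 a2 a3 a4 a5 a6 a7 a9 a10 h0 h1 h2
    h3 h4 h5 h6 h7 h9 h10 hB hC hodd
end

section
/- In the fundamental-presentation setting, assume the coefficients are nonnegative integers with a₁ ≥ a₂ ≥ ⋯ ≥ a₇ and a₉+a₁₀ ≥ a₀ ≥ a₉ ≥ a₁₀, and set a := a₀+a₁+⋯+a₇+a₉+a₁₀. Then: ⟨E₁,L⟩ ≤ ⟨E₂,L⟩ ≤ ⋯ ≤ ⟨E₇,L⟩ ≤ ⟨E₈,L⟩ = a; a ≤ ⟨E₉,L⟩, a ≤ ⟨E₉,₁₀,L⟩, and ⟨E₉,L⟩ ≤ ⟨E₁₀,L⟩; moreover, for every F ∈ M with ⟨F,Eᵢ⟩ ≥ 1 for all i ∈ {1,…,10} and ⟨F,E₉,₁₀⟩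 ≥ 1, one has ⟨F,L⟩ ≥ ⟨E₉,L⟩. (This is the lattice core of Lemma 5.2: an isotropic 10-sequence appearing in a fundamental presentation realizes the lowest intersection numbers of L with effective isotropic classes.) -/
/-!
Pairing `E = ∑ Eᵢ = 3D` with the `Eᵢ` gives `⟨Eᵢ, D⟩ = 3` and `D² = 10`, so `E₉,₁₀` meets
`E₁, …, E₈` once and `E₉, E₁₀` twice; the first five claims are then linear bookkeeping in the
coefficients. For the last one, write `fᵢ = ⟨F, Eᵢ⟩` and `g = ⟨F, E₉,₁₀⟩`: all are at least `1`,
and `3g + 3f₉ + 3f₁₀ = ∑ fᵢ ≥ 8 + f₉ + f₁₀` forces one of `g, f₉, f₁₀` to be at least `2`, which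
pays for the excess `a₀ - a₉` of `⟨E₉, L⟩` over `a` in each of the three cases.
-/

open Finset

section IsotropicSequence

variable {M ι : Type*} [AddCommGroup M] (B : M →ₗ[ℤ] M →ₗ[ℤ] ℤ) {E : ι → M}

theorem isotropic_apply_eq_ite [DecidableEq ι] (hE0 : ∀ i, B (E i) (E i) = 0)
    (hE1 : ∀ i j, i ≠ j → B (E i) (E j) = 1) (i j : ι) :
    B (E i) (E j) = if i = j then 0 else 1 := by
  split_ifs with h
  · exact h ▸ hE0 i
  · exact hE1 i j h

variable [Fintype ι]

theorem isotropic_apply_sum (hE0 : ∀ i, B (E i) (E i) = 0)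
    (hE1 : ∀ i j, i ≠ j → B (E i) (E j) = 1) (i : ι) :
    B (E i) (∑ j, E j) = Fintype.card ι - 1 := by
  classical
  rw [map_sum, ← add_sum_erase _ _ (mem_univ i), hE0,
    sum_congr rfl fun j hj => hE1 i j (ne_of_mem_erase hj).symm]
  simp [card_erase_of_mem, Nat.cast_pred (Fintype.card_pos_iff.2 ⟨i⟩)]

theorem isotropic_sum_apply (hE0 : ∀ i, B (E i) (E i) = 0)
    (hE1 : ∀ i j, i ≠ j → B (E i) (E j) = 1) (j : ι) :
    B (∑ i, E i) (E j) = Fintype.card ι - 1 := by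
  classical
  rw [map_sum, LinearMap.sum_apply, ← add_sum_erase _ _ (mem_univ j), hE0,
    sum_congr rfl fun i hi => hE1 i j (ne_of_mem_erase hi)]
  simp [card_erase_of_mem, Nat.cast_pred (Fintype.card_pos_iff.2 ⟨j⟩)]

variable {k : ℤ} {D : M}

theorem isotropic_mul_apply_of_smul_eq_sum (hE0 : ∀ i, B (E i) (E i) = 0)
    (hE1 : ∀ i j, i ≠ j → B (E i) (E j) = 1) (hD : k • D = ∑ i, E i) (i : ι) :
    k * B (E i) D = Fintype.card ι - 1 := by
  rw [← smul_eq_mul, ← map_smul, hD, isotropic_apply_sum B hE0 hE1]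

theorem isotropic_mul_apply_of_smul_eq_sum' (hE0 : ∀ i, B (E i) (E i) = 0)
    (hE1 : ∀ i j, i ≠ j → B (E i) (E j) = 1) (hD : k • D = ∑ i, E i) (j : ι) :
    k * B D (E j) = Fintype.card ι - 1 := by
  rw [← smul_eq_mul, ← LinearMap.smul_apply, ← map_smul, hD, isotropic_sum_apply B hE0 hE1]

theorem isotropic_mul_mul_apply_self_of_smul_eq_sum (hE0 : ∀ i, B (E i) (E i) = 0)
    (hE1 : ∀ i j, i ≠ j → B (E i) (E j) = 1) (hD : k • D = ∑ i, E i) :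
    k * (k * B D D) = Fintype.card ι * (Fintype.card ι - 1) := by
  rw [← smul_eq_mul k (B D D), ← map_smul, hD, map_sum, mul_sum]
  simp only [isotropic_mul_apply_of_smul_eq_sum' B hE0 hE1 hD, sum_const, card_univ, nsmul_eq_mul]

end IsotropicSequence

section FundamentalPresentation

variable {M : Type*} [AddCommGroup M] (B : M →ₗ[ℤ] M →ₗ[ℤ] ℤ) {E : Fin 10 → M} {D : M}

theorem apply_third_sum_eq_three (hE0 : ∀ i, B (E i) (E i) = 0)
    (hE1 : ∀ i j, i ≠ j → B (E i) (E j) = 1) (hD : (3 : ℤ) • D = ∑ i, E i) (i : Fin 10) :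
    B (E i) D = 3 := by
  have := isotropic_mul_apply_of_smul_eq_sum B hE0 hE1 hD i
  simp only [Fintype.card_fin] at this
  omega

theorem third_sum_apply_eq_three (hE0 : ∀ i, B (E i) (E i) = 0)
    (hE1 : ∀ i j, i ≠ j → B (E i) (E j) = 1) (hD : (3 : ℤ) • D = ∑ i, E i) (j : Fin 10) :
    B D (E j) = 3 := by
  have := isotropic_mul_apply_of_smul_eq_sum' B hE0 hE1 hD j
  simp only [Fintype.card_fin] at this
  omega

theorem third_sum_apply_self_eq_ten (hE0 : ∀ i, B (E i) (E i) = 0)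
    (hE1 : ∀ i j, i ≠ j → B (E i) (E j) = 1) (hD : (3 : ℤ) • D = ∑ i, E i) :
    B D D = 10 := by
  have := isotropic_mul_mul_apply_self_of_smul_eq_sum B hE0 hE1 hD
  simp only [Fintype.card_fin] at this
  omega

theorem eight_le_three_mul_apply_sub_add (hD : (3 : ℤ) • D = ∑ i, E i) {F : M}
    (hF : ∀ i, 1 ≤ B F (E i)) :
    8 ≤ 3 * B F (D - E 8 - E 9) + 2 * B F (E 8) + 2 * B F (E 9) := by
  have hsum : 3 * B F D = ∑ i, B F (E i) := by
    rw [← smul_eq_mul, ← map_smul, hD, map_sum]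
  simp only [Fin.sum_univ_succ, Fin.succ_zero_eq_one, Fin.succ_one_eq_two, Fin.reduceSucc,
    univ_unique, Fin.default_eq_zero, sum_singleton] at hsum
  simp only [map_sub]
  linarith [hF 0, hF 1, hF 2, hF 3, hF 4, hF 5, hF 6, hF 7]

end FundamentalPresentation

/-- Since `3 + 2 + 2 < 8`, one of `g, f, f'` is at least `2`; the three cases use `0 ≤ a₁₀`,
`a₀ ≤ a₉ + a₁₀` and `a₀ ≤ 2 a₉` respectively. -/
theorem two_mul_add_le_of_eight_le {a0 a9 a10 f f' g : ℤ} (h10 : 0 ≤ a10)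
    (h910 : a9 + a10 ≥ a0) (h09 : a0 ≥ a9) (h9ge10 : a9 ≥ a10)
    (hf : 1 ≤ f) (hf' : 1 ≤ f') (hg : 1 ≤ g) (h8 : 8 ≤ 3 * g + 2 * f + 2 * f') :
    2 * a0 + a10 ≤ a9 * f + a10 * f' + a0 * g := by
  have h9 : 0 ≤ a9 := h10.trans h9ge10
  have h0 : 0 ≤ a0 := h9.trans h09
  rcases le_or_gt 2 g with hg2 | hg1
  · nlinarith [mul_le_mul_of_nonneg_left hf h9, mul_le_mul_of_nonneg_left hf' h10,
      mul_le_mul_of_nonneg_left hg2 h0]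
  rcases le_or_gt 2 f' with hf'2 | hf'1
  · nlinarith [mul_le_mul_of_nonneg_left hf h9, mul_le_mul_of_nonneg_left hf'2 h10]
  have hf2 : 2 ≤ f := by omega
  nlinarith [mul_le_mul_of_nonneg_left hf2 h9]

theorem fundamental_presentation_minimal_intersections_general {M : Type*} [AddCommGroup M]
    (B : M →ₗ[ℤ] M →ₗ[ℤ] ℤ)
    (E : Fin 10 → M)
    (hE0 : ∀ i, B (E i) (E i) = 0)
    (hE1 : ∀ i j, i ≠ j → B (E i) (E j) = 1)
    (D : M) (hD : (3 : ℤ) • D = ∑ i, E i)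
    (a0 a1 a2 a3 a4 a5 a6 a7 a9 a10 : ℤ)
    (h1 : 0 ≤ a1) (h2 : 0 ≤ a2) (h3 : 0 ≤ a3) (h4 : 0 ≤ a4)
    (h5 : 0 ≤ a5) (h6 : 0 ≤ a6) (h7 : 0 ≤ a7) (h10 : 0 ≤ a10)
    (h12 : a1 ≥ a2) (h23 : a2 ≥ a3) (h34 : a3 ≥ a4) (h45 : a4 ≥ a5)
    (h56 : a5 ≥ a6) (h67 : a6 ≥ a7)
    (h910 : a9 + a10 ≥ a0) (h09 : a0 ≥ a9) (h9ge10 : a9 ≥ a10)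
    (L : M)
    (hL : L = a1 • E 0 + a2 • E 1 + a3 • E 2 + a4 • E 3 + a5 • E 4 +
              a6 • E 5 + a7 • E 6 + a9 • E 8 + a10 • E 9 +
              a0 • (D - E 8 - E 9))
    (a : ℤ) (ha : a = a0 + a1 + a2 + a3 + a4 + a5 + a6 + a7 + a9 + a10) :
    (B (E 0) L ≤ B (E 1) L ∧ B (E 1) L ≤ B (E 2) L ∧ B (E 2) L ≤ B (E 3) L ∧
     B (E 3) L ≤ B (E 4) L ∧ B (E 4) L ≤ B (E 5) L ∧ B (E 5) L ≤ B (E 6) L ∧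
     B (E 6) L ≤ B (E 7) L) ∧
    B (E 7) L = a ∧
    a ≤ B (E 8) L ∧
    a ≤ B (D - E 8 - E 9) L ∧
    B (E 8) L ≤ B (E 9) L ∧
    (∀ F : M, (∀ i, 1 ≤ B F (E i)) → 1 ≤ B F (D - E 8 - E 9) →
      B F L ≥ B (E 8) L) := by
  have hEE := isotropic_apply_eq_ite B hE0 hE1
  have hED := apply_third_sum_eq_three B hE0 hE1 hD
  have hDE := third_sum_apply_eq_three B hE0 hE1 hD
  have hDD := third_sum_apply_self_eq_ten B hE0 hE1 hD
  have pairing : ∀ X, B X L = a1 * B X (E 0) + a2 * B X (E 1) + a3 * B X (E 2) +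
      a4 * B X (E 3) + a5 * B X (E 4) + a6 * B X (E 5) + a7 * B X (E 6) + a9 * B X (E 8) +
      a10 * B X (E 9) + a0 * B X (D - E 8 - E 9) := fun X => by
    simp only [hL, map_add, map_smul, smul_eq_mul]
  have hE8L : B (E 8) L = a + a0 - a9 := by
    simp only [pairing, map_sub, hEE, hED, Fin.isValue, Fin.reduceEq, ↓reduceIte]; omega
  refine ⟨⟨?_, ?_, ?_, ?_, ?_, ?_, ?_⟩, ?_, ?_, ?_, ?_, fun F hF hF910 => ?minimal⟩
  case minimal =>
    have hcore := two_mul_add_le_of_eight_le h10 h910 h09 h9ge10 (hF 8) (hF 9) hF910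
      (eight_le_three_mul_apply_sub_add B hD hF)
    rw [pairing F, hE8L, ha]
    linarith [le_mul_of_one_le_right h1 (hF 0), le_mul_of_one_le_right h2 (hF 1),
      le_mul_of_one_le_right h3 (hF 2), le_mul_of_one_le_right h4 (hF 3),
      le_mul_of_one_le_right h5 (hF 4), le_mul_of_one_le_right h6 (hF 5),
      le_mul_of_one_le_right h7 (hF 6)]
  all_goals
    simp only [pairing, map_sub, LinearMap.sub_apply, hEE, hED, hDE, hDD, Fin.isValue,
      Fin.reduceEq, ↓reduceIte]
    omega

/-- Lattice core of Lemma 5.2: an isotropic 10-sequence appearing in a fundamental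
presentation realizes the lowest intersection numbers of `L` with isotropic classes. -/
theorem fundamental_presentation_minimal_intersections {M : Type*} [AddCommGroup M]
    (B : M →ₗ[ℤ] M →ₗ[ℤ] ℤ) (hsymm : ∀ x y : M, B x y = B y x)
    (E : Fin 10 → M)
    (hE0 : ∀ i, B (E i) (E i) = 0)
    (hE1 : ∀ i j, i ≠ j → B (E i) (E j) = 1)
    (D : M) (hD : (3 : ℤ) • D = ∑ i, E i)
    (a0 a1 a2 a3 a4 a5 a6 a7 a9 a10 : ℤ)
    (h0 : 0 ≤ a0) (h1 : 0 ≤ a1) (h2 : 0 ≤ a2) (h3 : 0 ≤ a3) (h4 : 0 ≤ a4)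
    (h5 : 0 ≤ a5) (h6 : 0 ≤ a6) (h7 : 0 ≤ a7) (h9 : 0 ≤ a9) (h10 : 0 ≤ a10)
    (h12 : a1 ≥ a2) (h23 : a2 ≥ a3) (h34 : a3 ≥ a4) (h45 : a4 ≥ a5)
    (h56 : a5 ≥ a6) (h67 : a6 ≥ a7)
    (h910 : a9 + a10 ≥ a0) (h09 : a0 ≥ a9) (h9ge10 : a9 ≥ a10)
    (L : M)
    (hL : L = a1 • E 0 + a2 • E 1 + a3 • E 2 + a4 • E 3 + a5 • E 4 +
              a6 • E 5 + a7 • E 6 + a9 • E 8 + a10 • E 9 +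
              a0 • (D - E 8 - E 9))
    (a : ℤ) (ha : a = a0 + a1 + a2 + a3 + a4 + a5 + a6 + a7 + a9 + a10) :
    (B (E 0) L ≤ B (E 1) L ∧ B (E 1) L ≤ B (E 2) L ∧ B (E 2) L ≤ B (E 3) L ∧
     B (E 3) L ≤ B (E 4) L ∧ B (E 4) L ≤ B (E 5) L ∧ B (E 5) L ≤ B (E 6) L ∧
     B (E 6) L ≤ B (E 7) L) ∧
    B (E 7) L = a ∧
    a ≤ B (E 8) L ∧
    a ≤ B (D - E 8 - E 9) L ∧
    B (E 8) L ≤ B (E 9) L ∧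
    (∀ F : M, (∀ i, 1 ≤ B F (E i)) → 1 ≤ B F (D - E 8 - E 9) →
      B F L ≥ B (E 8) L) :=
  fundamental_presentation_minimal_intersections_general B E hE0 hE1 D hD a0 a1 a2 a3 a4 a5 a6 a7 a9
    a10 h1 h2 h3 h4 h5 h6 h7 h10 h12 h23 h34 h45 h56 h67 h910 h09 h9ge10 L hL a ha
end

section
/- Let φ₁,…,φ₁₀ be integers with 0 < φ₁ ≤ φ₂ ≤ ⋯ ≤ φ₁₀, with φ₁+⋯+φ₁₀ divisible by 3, and with φ₁+⋯+φ₇ ≥ 2(φ₈+φ₉+φ₁₀). Then there exists an integer g ≥ 2 such that (φ₁+⋯+φ₁₀)² − 9(φ₁²+⋯+φ₁₀²) = 18(g−1); that is, the quantity (1/9)(∑φᵢ)² − ∑φᵢ² is a positive even integer, equal to 2g−2 for a unique integer g ≥ 2. (This is the statement, implicit in Theorems 1.4 and 1.5, that every tuple satisfying conditions (i)–(iii) determines a well-defined sectional genus g ≥ 2.) -/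
/-!
The quantity `Q = (∑ φᵢ)² − 9 ∑ φᵢ²` is divisible by 9 because `3 ∣ ∑ φᵢ`, and it is even because
`(∑ φᵢ)² ≡ ∑ φᵢ² (mod 2)`; hence `18 ∣ Q`. The form `Q` is Lorentzian (positive on `(1, …, 1)`,
negative definite on its orthogonal complement), and conditions (i)–(iii) cut out a polyhedral cone
lying in its positive cone, so `Q > 0`. A positive multiple of 18 is `18 (g − 1)` for a unique `g ≥ 2`.
-/

theorem Finset.two_dvd_sq_sum_sub_sum_sq {ι : Type*} (s : Finset ι) (f : ι → ℤ) :
    2 ∣ (∑ i ∈ s, f i) ^ 2 - ∑ i ∈ s, f i ^ 2 := by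
  induction s using Finset.cons_induction with
  | empty => simp
  | cons a s _ ih =>
    rw [Finset.sum_cons, Finset.sum_cons]
    have expand : (f a + ∑ i ∈ s, f i) ^ 2 - (f a ^ 2 + ∑ i ∈ s, f i ^ 2) =
        2 * (f a * ∑ i ∈ s, f i) + ((∑ i ∈ s, f i) ^ 2 - ∑ i ∈ s, f i ^ 2) := by ring
    rw [expand]
    exact (dvd_mul_right 2 _).add ih

theorem Int.eighteen_dvd_sq_sub_nine_mul {S P : ℤ} (h3 : 3 ∣ S) (h2 : 2 ∣ S ^ 2 - P) :
    18 ∣ S ^ 2 - 9 * P := by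
  have h9 : 9 ∣ S ^ 2 - 9 * P :=
    (by simpa using pow_dvd_pow_of_dvd h3 2 : (9 : ℤ) ∣ S ^ 2).sub (dvd_mul_right 9 P)
  have h2' : 2 ∣ S ^ 2 - 9 * P := by
    rw [show S ^ 2 - 9 * P = (S ^ 2 - P) - 2 * (4 * P) by ring]
    exact h2.sub (dvd_mul_right 2 _)
  exact (show IsCoprime (2 : ℤ) 9 by norm_num [Int.isCoprime_iff_gcd_eq_one]).mul_dvd h2' h9

theorem Int.existsUnique_two_le_and_eq_mul_sub_one {n Q : ℤ} (hn : 0 < n) (hQ : 0 < Q)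
    (hdvd : n ∣ Q) : ∃! g : ℤ, 2 ≤ g ∧ Q = n * (g - 1) := by
  obtain ⟨m, rfl⟩ := hdvd
  have hm : 0 < m := pos_of_mul_pos_right hQ hn.le
  refine ⟨m + 1, ⟨by omega, by ring⟩, fun g ⟨_, hg⟩ => ?_⟩
  have : m = g - 1 := mul_left_cancel₀ hn.ne' hg
  omega

theorem sq_sum_sub_nine_mul_sum_sq_pos (φ1 φ2 φ3 φ4 φ5 φ6 φ7 φ8 φ9 φ10 : ℤ) (hpos : 0 < φ1)
    (h12 : φ1 ≤ φ2) (h23 : φ2 ≤ φ3) (h34 : φ3 ≤ φ4) (h45 : φ4 ≤ φ5)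
    (h56 : φ5 ≤ φ6) (h67 : φ6 ≤ φ7) (h78 : φ7 ≤ φ8) (h89 : φ8 ≤ φ9) (h910 : φ9 ≤ φ10)
    (hineq : φ1 + φ2 + φ3 + φ4 + φ5 + φ6 + φ7 ≥ 2 * (φ8 + φ9 + φ10)) :
    0 < (φ1 + φ2 + φ3 + φ4 + φ5 + φ6 + φ7 + φ8 + φ9 + φ10) ^ 2 -
      9 * (φ1 ^ 2 + φ2 ^ 2 + φ3 ^ 2 + φ4 ^ 2 + φ5 ^ 2 + φ6 ^ 2 + φ7 ^ 2 +
        φ8 ^ 2 + φ9 ^ 2 + φ10 ^ 2) := by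
  -- On the generators of the cone, `Q` and the pairwise values of its polar form are nonnegative,
  -- and `Q` is positive on those generators that contribute to `φ1`.
  nlinarith [mul_pos hpos hpos]

/-- Every 10-tuple satisfying conditions (i)–(iii) of Theorem 1.5 determines a
well-defined sectional genus `g ≥ 2` via `2g−2 = (1/9)(∑φᵢ)² − ∑φᵢ²`. -/
theorem genus_well_defined_from_phi_vector
    (φ1 φ2 φ3 φ4 φ5 φ6 φ7 φ8 φ9 φ10 : ℤ)
    (hpos : 0 < φ1)
    (h12 : φ1 ≤ φ2) (h23 : φ2 ≤ φ3) (h34 : φ3 ≤ φ4) (h45 : φ4 ≤ φ5)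
    (h56 : φ5 ≤ φ6) (h67 : φ6 ≤ φ7) (h78 : φ7 ≤ φ8) (h89 : φ8 ≤ φ9)
    (h910 : φ9 ≤ φ10)
    (hdvd : (3 : ℤ) ∣ (φ1 + φ2 + φ3 + φ4 + φ5 + φ6 + φ7 + φ8 + φ9 + φ10))
    (hineq : φ1 + φ2 + φ3 + φ4 + φ5 + φ6 + φ7 ≥ 2 * (φ8 + φ9 + φ10)) :
    ∃! g : ℤ, 2 ≤ g ∧
      (φ1 + φ2 + φ3 + φ4 + φ5 + φ6 + φ7 + φ8 + φ9 + φ10) ^ 2 -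
        9 * (φ1 ^ 2 + φ2 ^ 2 + φ3 ^ 2 + φ4 ^ 2 + φ5 ^ 2 + φ6 ^ 2 + φ7 ^ 2 +
          φ8 ^ 2 + φ9 ^ 2 + φ10 ^ 2) = 18 * (g - 1) := by
  have hparity := Finset.univ.two_dvd_sq_sum_sub_sum_sq
    ![φ1, φ2, φ3, φ4, φ5, φ6, φ7, φ8, φ9, φ10]
  simp only [Fin.sum_univ_succ, Fin.sum_univ_zero, Matrix.cons_val_zero, Matrix.cons_val_succ,
    add_zero, ← add_assoc] at hparity
  exact Int.existsUnique_two_le_and_eq_mul_sub_one (by norm_num)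
    (sq_sum_sub_nine_mul_sum_sq_pos _ _ _ _ _ _ _ _ _ _ hpos h12 h23 h34 h45 h56 h67 h78 h89 h910
      hineq)
    (Int.eighteen_dvd_sq_sub_nine_mul hdvd hparity)
end

section
/- Let g and φ₁,…,φ₁₀ be integers with 0 < φ₁ ≤ φ₂ ≤ ⋯ ≤ φ₁₀, with φ₁+⋯+φ₁₀ divisible by 3, with φ₁+⋯+φ₇ ≥ 2(φ₈+φ₉+φ₁₀), and with (φ₁+⋯+φ₁₀)² − 9(φ₁²+⋯+φ₁₀²) = 18(g−1). If φ₁ = 1, then φ₂ = g−1 and φ₃ = φ₄ = ⋯ = φ₁₀ = g. Conversely, for every integer g ≥ 2 the tuple (1, g−1, g, g, g, g, g, g, g, g) satisfies all the above conditions. (This is the classification in the paper's Example for genus g and φ = 1: there is exactly one irreducible component of ℰ_g with φ₁ = 1.) -/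
/-!
Writing condition (iii) as
`∑_{k=2}^{7} (φ₈ - φₖ) + 2(φ₉ - φ₈) + 2(φ₁₀ - φ₈) ≤ φ₁`, all summands are nonnegative by
monotonicity, so for `φ₁ = 1` at most one of them is `1`. If all vanish the sum `1 + 9φ₈` is not
divisible by 3, so the tuple is `(1, m - 1, m, …, m)`; for that tuple condition (v) reads
`18(m - 1) = 18(g - 1)`.
-/

/-- Conditions (i)–(iii) and (v) of Theorem 1.5 of the paper on a 10-tuple
`(φ₁,…,φ₁₀)` and the genus `g`: `0 < φ₁ ≤ ⋯ ≤ φ₁₀`, the sum is divisible by 3,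
`φ₁+⋯+φ₇ ≥ 2(φ₈+φ₉+φ₁₀)`, and `(∑φᵢ)² − 9∑φᵢ² = 18(g−1)`. -/
def PhiConds (g φ1 φ2 φ3 φ4 φ5 φ6 φ7 φ8 φ9 φ10 : ℤ) : Prop :=
  0 < φ1 ∧ φ1 ≤ φ2 ∧ φ2 ≤ φ3 ∧ φ3 ≤ φ4 ∧ φ4 ≤ φ5 ∧ φ5 ≤ φ6 ∧ φ6 ≤ φ7 ∧
    φ7 ≤ φ8 ∧ φ8 ≤ φ9 ∧ φ9 ≤ φ10 ∧
  (3 : ℤ) ∣ (φ1 + φ2 + φ3 + φ4 + φ5 + φ6 + φ7 + φ8 + φ9 + φ10) ∧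
  φ1 + φ2 + φ3 + φ4 + φ5 + φ6 + φ7 ≥ 2 * (φ8 + φ9 + φ10) ∧
  (φ1 + φ2 + φ3 + φ4 + φ5 + φ6 + φ7 + φ8 + φ9 + φ10) ^ 2 -
      9 * (φ1 ^ 2 + φ2 ^ 2 + φ3 ^ 2 + φ4 ^ 2 + φ5 ^ 2 + φ6 ^ 2 + φ7 ^ 2 +
        φ8 ^ 2 + φ9 ^ 2 + φ10 ^ 2) = 18 * (g - 1)

theorem PhiConds.eq_of_phi1_eq_one {g φ1 φ2 φ3 φ4 φ5 φ6 φ7 φ8 φ9 φ10 : ℤ}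
    (h : PhiConds g φ1 φ2 φ3 φ4 φ5 φ6 φ7 φ8 φ9 φ10) (hφ1 : φ1 = 1) :
    φ2 = φ3 - 1 ∧ φ4 = φ3 ∧ φ5 = φ3 ∧ φ6 = φ3 ∧ φ7 = φ3 ∧ φ8 = φ3 ∧ φ9 = φ3 ∧ φ10 = φ3 := by
  obtain ⟨-, h12, h23, h34, h45, h56, h67, h78, h89, h910, hdvd, hineq, -⟩ := h
  have deficit_le : (φ8 - φ2) + (φ8 - φ3) + (φ8 - φ4) + (φ8 - φ5) + (φ8 - φ6) + (φ8 - φ7) +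
      2 * (φ9 - φ8) + 2 * (φ10 - φ8) ≤ φ1 := by
    linarith
  omega

theorem phiConds_one_pred_iff (g m : ℤ) :
    PhiConds g 1 (m - 1) m m m m m m m m ↔ 2 ≤ m ∧ g = m := by
  have quadratic : (1 + (m - 1) + m + m + m + m + m + m + m + m) ^ 2 -
      9 * (1 ^ 2 + (m - 1) ^ 2 + m ^ 2 + m ^ 2 + m ^ 2 + m ^ 2 + m ^ 2 +
        m ^ 2 + m ^ 2 + m ^ 2) = 18 * (m - 1) := by
    ring
  have sum_dvd : (3 : ℤ) ∣ 1 + (m - 1) + m + m + m + m + m + m + m + m := ⟨3 * m, by ring⟩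
  simp only [PhiConds, quadratic, sum_dvd, le_refl, true_and]
  omega

/-- Classification of φ-vectors with `φ₁ = 1`: the only possibility in genus `g` is
`(1, g−1, g, …, g)`, and conversely this tuple satisfies all conditions for every
`g ≥ 2`. -/
theorem phi_vector_classification_phi_eq_one
    (g φ1 φ2 φ3 φ4 φ5 φ6 φ7 φ8 φ9 φ10 : ℤ)
    (h : PhiConds g φ1 φ2 φ3 φ4 φ5 φ6 φ7 φ8 φ9 φ10) :
    (φ1 = 1 →
      φ2 = g - 1 ∧ φ3 = g ∧ φ4 = g ∧ φ5 = g ∧ φ6 = g ∧ φ7 = g ∧ φ8 = g ∧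
        φ9 = g ∧ φ10 = g) ∧
    (∀ g' : ℤ, 2 ≤ g' →
      PhiConds g' 1 (g' - 1) g' g' g' g' g' g' g' g') := by
  refine ⟨fun hφ1 => ?_, fun g' hg' => (phiConds_one_pred_iff g' g').mpr ⟨hg', rfl⟩⟩
  obtain ⟨e2, e4, e5, e6, e7, e8, e9, e10⟩ := h.eq_of_phi1_eq_one hφ1
  rw [hφ1, e2, e4, e5, e6, e7, e8, e9, e10] at h
  obtain ⟨-, rfl⟩ := (phiConds_one_pred_iff g φ3).mp h
  exact ⟨e2, rfl, e4, e5, e6, e7, e8, e9, e10⟩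
end

section
/- Let g and φ₁,…,φ₁₀ be integers with 0 < φ₁ ≤ φ₂ ≤ ⋯ ≤ φ₁₀, with φ₁+⋯+φ₁₀ divisible by 3, with φ₁+⋯+φ₇ ≥ 2(φ₈+φ₉+φ₁₀), and with (φ₁+⋯+φ₁₀)² − 9(φ₁²+⋯+φ₁₀²) = 18(g−1). If φ₁ = 2, then exactly one of the following holds: (a) g is even, g ≥ 4, and (φ₁,…,φ₁₀) = (2, g/2, g/2, (g+2)/2, …, (g+2)/2) (entries 4 through 10 equal (g+2)/2); (b) g is odd, g ≥ 3, and (φ₁,…,φ₁₀) = (2, (g+1)/2, …, (g+1)/2, (g+3)/2) (entries 2 through 9 equal (g+1)/2); (c) g is odd, g ≥ 5, and (φ₁,…,φ₁₀) = (2, (g−1)/2, (g+3)/2, …, (g+3)/2) (entries 3 through 10 equal (g+3)/2). (This is the classification in the paper's Example for genus g and φ = 2.) -/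
def PhiTwoCaseA (g φ2 φ3 φ4 φ5 φ6 φ7 φ8 φ9 φ10 : ℤ) : Prop :=
  Even g ∧ 4 ≤ g ∧ 2 * φ2 = g ∧ 2 * φ3 = g ∧ 2 * φ4 = g + 2 ∧
    2 * φ5 = g + 2 ∧ 2 * φ6 = g + 2 ∧ 2 * φ7 = g + 2 ∧ 2 * φ8 = g + 2 ∧
    2 * φ9 = g + 2 ∧ 2 * φ10 = g + 2

def PhiTwoCaseB (g φ2 φ3 φ4 φ5 φ6 φ7 φ8 φ9 φ10 : ℤ) : Prop :=
  Odd g ∧ 3 ≤ g ∧ 2 * φ2 = g + 1 ∧ 2 * φ3 = g + 1 ∧ 2 * φ4 = g + 1 ∧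
    2 * φ5 = g + 1 ∧ 2 * φ6 = g + 1 ∧ 2 * φ7 = g + 1 ∧ 2 * φ8 = g + 1 ∧
    2 * φ9 = g + 1 ∧ 2 * φ10 = g + 3

def PhiTwoCaseC (g φ2 φ3 φ4 φ5 φ6 φ7 φ8 φ9 φ10 : ℤ) : Prop :=
  Odd g ∧ 5 ≤ g ∧ 2 * φ2 = g - 1 ∧ 2 * φ3 = g + 3 ∧ 2 * φ4 = g + 3 ∧
    2 * φ5 = g + 3 ∧ 2 * φ6 = g + 3 ∧ 2 * φ7 = g + 3 ∧ 2 * φ8 = g + 3 ∧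
    2 * φ9 = g + 3 ∧ 2 * φ10 = g + 3

section Disjointness

variable {g φ2 φ3 φ4 φ5 φ6 φ7 φ8 φ9 φ10 : ℤ}

theorem not_phiTwoCaseA_and_phiTwoCaseB :
    ¬(PhiTwoCaseA g φ2 φ3 φ4 φ5 φ6 φ7 φ8 φ9 φ10 ∧ PhiTwoCaseB g φ2 φ3 φ4 φ5 φ6 φ7 φ8 φ9 φ10) :=
  fun ⟨⟨he, _⟩, ⟨ho, _⟩⟩ => Int.not_odd_iff_even.mpr he ho

theorem not_phiTwoCaseA_and_phiTwoCaseC :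
    ¬(PhiTwoCaseA g φ2 φ3 φ4 φ5 φ6 φ7 φ8 φ9 φ10 ∧ PhiTwoCaseC g φ2 φ3 φ4 φ5 φ6 φ7 φ8 φ9 φ10) :=
  fun ⟨⟨he, _⟩, ⟨ho, _⟩⟩ => Int.not_odd_iff_even.mpr he ho

theorem not_phiTwoCaseB_and_phiTwoCaseC :
    ¬(PhiTwoCaseB g φ2 φ3 φ4 φ5 φ6 φ7 φ8 φ9 φ10 ∧ PhiTwoCaseC g φ2 φ3 φ4 φ5 φ6 φ7 φ8 φ9 φ10) := by
  rintro ⟨⟨-, -, hb, -⟩, ⟨-, -, hc, -⟩⟩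
  omega

end Disjointness

namespace PhiConds

variable {g φ1 φ2 φ3 φ4 φ5 φ6 φ7 φ8 φ9 φ10 : ℤ}

theorem deficit_add_two_mul_excess_le (h : PhiConds g φ1 φ2 φ3 φ4 φ5 φ6 φ7 φ8 φ9 φ10) :
    (φ7 - φ2) + (φ7 - φ3) + (φ7 - φ4) + (φ7 - φ5) + (φ7 - φ6) +
      2 * ((φ8 - φ7) + (φ9 - φ7) + (φ10 - φ7)) ≤ φ1 := by
  obtain ⟨-, -, -, -, -, -, -, -, -, -, -, hineq, -⟩ := h
  linarith

theorem three_dvd_add_excess_sub_deficit (h : PhiConds g φ1 φ2 φ3 φ4 φ5 φ6 φ7 φ8 φ9 φ10) :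
    3 ∣ φ1 + ((φ8 - φ7) + (φ9 - φ7) + (φ10 - φ7)) -
      ((φ7 - φ2) + (φ7 - φ3) + (φ7 - φ4) + (φ7 - φ5) + (φ7 - φ6)) := by
  obtain ⟨-, -, -, -, -, -, -, -, -, -, hdvd, -⟩ := h
  have hsum : φ1 + ((φ8 - φ7) + (φ9 - φ7) + (φ10 - φ7)) -
      ((φ7 - φ2) + (φ7 - φ3) + (φ7 - φ4) + (φ7 - φ5) + (φ7 - φ6)) =
      (φ1 + φ2 + φ3 + φ4 + φ5 + φ6 + φ7 + φ8 + φ9 + φ10) - 3 * (3 * φ7) := by ring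
  rw [hsum]
  exact dvd_sub hdvd (dvd_mul_right 3 _)

theorem shape_of_phi1_eq_two (h : PhiConds g φ1 φ2 φ3 φ4 φ5 φ6 φ7 φ8 φ9 φ10) (h2 : φ1 = 2) :
    (φ2 = φ7 ∧ φ3 = φ7 ∧ φ4 = φ7 ∧ φ5 = φ7 ∧ φ6 = φ7 ∧ φ8 = φ7 ∧ φ9 = φ7 ∧
        φ10 = φ7 + 1 ∧ 2 ≤ φ7) ∨
      (φ2 = φ7 - 1 ∧ φ3 = φ7 - 1 ∧ φ4 = φ7 ∧ φ5 = φ7 ∧ φ6 = φ7 ∧ φ8 = φ7 ∧ φ9 = φ7 ∧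
        φ10 = φ7 ∧ 3 ≤ φ7) ∨
      (φ2 = φ7 - 2 ∧ φ3 = φ7 ∧ φ4 = φ7 ∧ φ5 = φ7 ∧ φ6 = φ7 ∧ φ8 = φ7 ∧ φ9 = φ7 ∧
        φ10 = φ7 ∧ 4 ≤ φ7) := by
  have hle := h.deficit_add_two_mul_excess_le
  have hdvd := h.three_dvd_add_excess_sub_deficit
  obtain ⟨-, h12, h23, h34, h45, h56, h67, h78, h89, h910, -⟩ := h
  subst h2
  omega

theorem phiTwoCaseA_or_phiTwoCaseB_or_phiTwoCaseC
    (h : PhiConds g φ1 φ2 φ3 φ4 φ5 φ6 φ7 φ8 φ9 φ10) (h2 : φ1 = 2) :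
    PhiTwoCaseA g φ2 φ3 φ4 φ5 φ6 φ7 φ8 φ9 φ10 ∨ PhiTwoCaseB g φ2 φ3 φ4 φ5 φ6 φ7 φ8 φ9 φ10 ∨
      PhiTwoCaseC g φ2 φ3 φ4 φ5 φ6 φ7 φ8 φ9 φ10 := by
  have hshape := h.shape_of_phi1_eq_two h2
  obtain ⟨-, -, -, -, -, -, -, -, -, -, -, -, hquad⟩ := h
  rw [h2] at hquad
  rcases hshape with
    ⟨e2, e3, e4, e5, e6, e8, e9, e10, ha⟩ | ⟨e2, e3, e4, e5, e6, e8, e9, e10, ha⟩ |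
      ⟨e2, e3, e4, e5, e6, e8, e9, e10, ha⟩ <;>
    rw [e2, e3, e4, e5, e6, e8, e9, e10] at hquad ⊢
  · have hg : g = 2 * φ7 - 1 := by linarith
    exact Or.inr (Or.inl ⟨⟨φ7 - 1, by omega⟩, by omega, by omega, by omega, by omega, by omega,
      by omega, by omega, by omega, by omega, by omega⟩)
  · have hg : g = 2 * φ7 - 2 := by linarith
    exact Or.inl ⟨⟨φ7 - 1, by omega⟩, by omega, by omega, by omega, by omega, by omega,
      by omega, by omega, by omega, by omega, by omega⟩
  · have hg : g = 2 * φ7 - 3 := by linarith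
    exact Or.inr (Or.inr ⟨⟨φ7 - 2, by omega⟩, by omega, by omega, by omega, by omega, by omega,
      by omega, by omega, by omega, by omega, by omega⟩)

end PhiConds

/-- Classification of φ-vectors with `φ₁ = 2` (the paper's Example for `φ = 2`):
exactly one of the three listed cases holds. -/
theorem phi_vector_classification_phi_eq_two
    (g φ1 φ2 φ3 φ4 φ5 φ6 φ7 φ8 φ9 φ10 : ℤ)
    (h : PhiConds g φ1 φ2 φ3 φ4 φ5 φ6 φ7 φ8 φ9 φ10)
    (h2 : φ1 = 2) :
    ((Even g ∧ 4 ≤ g ∧ 2 * φ2 = g ∧ 2 * φ3 = g ∧ 2 * φ4 = g + 2 ∧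
        2 * φ5 = g + 2 ∧ 2 * φ6 = g + 2 ∧ 2 * φ7 = g + 2 ∧ 2 * φ8 = g + 2 ∧
        2 * φ9 = g + 2 ∧ 2 * φ10 = g + 2) ∨
     (Odd g ∧ 3 ≤ g ∧ 2 * φ2 = g + 1 ∧ 2 * φ3 = g + 1 ∧ 2 * φ4 = g + 1 ∧
        2 * φ5 = g + 1 ∧ 2 * φ6 = g + 1 ∧ 2 * φ7 = g + 1 ∧ 2 * φ8 = g + 1 ∧
        2 * φ9 = g + 1 ∧ 2 * φ10 = g + 3) ∨
     (Odd g ∧ 5 ≤ g ∧ 2 * φ2 = g - 1 ∧ 2 * φ3 = g + 3 ∧ 2 * φ4 = g + 3 ∧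
        2 * φ5 = g + 3 ∧ 2 * φ6 = g + 3 ∧ 2 * φ7 = g + 3 ∧ 2 * φ8 = g + 3 ∧
        2 * φ9 = g + 3 ∧ 2 * φ10 = g + 3)) ∧
    ¬((Even g ∧ 4 ≤ g ∧ 2 * φ2 = g ∧ 2 * φ3 = g ∧ 2 * φ4 = g + 2 ∧
        2 * φ5 = g + 2 ∧ 2 * φ6 = g + 2 ∧ 2 * φ7 = g + 2 ∧ 2 * φ8 = g + 2 ∧
        2 * φ9 = g + 2 ∧ 2 * φ10 = g + 2) ∧
      (Odd g ∧ 3 ≤ g ∧ 2 * φ2 = g + 1 ∧ 2 * φ3 = g + 1 ∧ 2 * φ4 = g + 1 ∧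
        2 * φ5 = g + 1 ∧ 2 * φ6 = g + 1 ∧ 2 * φ7 = g + 1 ∧ 2 * φ8 = g + 1 ∧
        2 * φ9 = g + 1 ∧ 2 * φ10 = g + 3)) ∧
    ¬((Even g ∧ 4 ≤ g ∧ 2 * φ2 = g ∧ 2 * φ3 = g ∧ 2 * φ4 = g + 2 ∧
        2 * φ5 = g + 2 ∧ 2 * φ6 = g + 2 ∧ 2 * φ7 = g + 2 ∧ 2 * φ8 = g + 2 ∧
        2 * φ9 = g + 2 ∧ 2 * φ10 = g + 2) ∧
      (Odd g ∧ 5 ≤ g ∧ 2 * φ2 = g - 1 ∧ 2 * φ3 = g + 3 ∧ 2 * φ4 = g + 3 ∧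
        2 * φ5 = g + 3 ∧ 2 * φ6 = g + 3 ∧ 2 * φ7 = g + 3 ∧ 2 * φ8 = g + 3 ∧
        2 * φ9 = g + 3 ∧ 2 * φ10 = g + 3)) ∧
    ¬((Odd g ∧ 3 ≤ g ∧ 2 * φ2 = g + 1 ∧ 2 * φ3 = g + 1 ∧ 2 * φ4 = g + 1 ∧
        2 * φ5 = g + 1 ∧ 2 * φ6 = g + 1 ∧ 2 * φ7 = g + 1 ∧ 2 * φ8 = g + 1 ∧
        2 * φ9 = g + 1 ∧ 2 * φ10 = g + 3) ∧
      (Odd g ∧ 5 ≤ g ∧ 2 * φ2 = g - 1 ∧ 2 * φ3 = g + 3 ∧ 2 * φ4 = g + 3 ∧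
        2 * φ5 = g + 3 ∧ 2 * φ6 = g + 3 ∧ 2 * φ7 = g + 3 ∧ 2 * φ8 = g + 3 ∧
        2 * φ9 = g + 3 ∧ 2 * φ10 = g + 3)) := by
  exact ⟨h.phiTwoCaseA_or_phiTwoCaseB_or_phiTwoCaseC h2, not_phiTwoCaseA_and_phiTwoCaseB,
    not_phiTwoCaseA_and_phiTwoCaseC, not_phiTwoCaseB_and_phiTwoCaseC⟩
end

section
/- Let g and φ₁,…,φ₁₀ be integers with 0 < φ₁ ≤ φ₂ ≤ ⋯ ≤ φ₁₀, with φ₁+⋯+φ₁₀ divisible by 3, with φ₁+⋯+φ₇ ≥ 2(φ₈+φ₉+φ₁₀), and with (φ₁+⋯+φ₁₀)² − 9(φ₁²+⋯+φ₁₀²) = 18(g−1). If φ₁ = 3, then exactly one of the following holds: (a) g ≡ 0 mod 3, g ≥ 6, and (φ₁,…,φ₁₀) = (3, (g+3)/3, …, (g+3)/3); (b) g ≡ 0 mod 3, g ≥ 9, and (φ₁,…,φ₁₀) = (3, g/3, (g+3)/3, (g+6)/3, …, (g+6)/3) (entries 4 through 10 equal (g+6)/3); (c) g ≡ 1 mod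 3, g ≥ 7, and (φ₁,…,φ₁₀) = (3, (g+2)/3, (g+2)/3, (g+2)/3, (g+5)/3, …, (g+5)/3) (entries 5 through 10 equal (g+5)/3); (d) g ≡ 1 mod 3, g ≥ 10, and (φ₁,…,φ₁₀) = (3, (g−1)/3, (g+8)/3, …, (g+8)/3) (entries 3 through 10 equal (g+8)/3); (e) g ≡ 2 mod 3, g ≥ 8, and (φ₁,…,φ₁₀) = (3, (g+1)/3, (g+4)/3, …, (g+4)/3, (g+7)/3) (entries 3 through 9 equal (g+4)/3). (This is the classification in the paper's Example for genus g and φ = 3.) -/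
/-- Case (a) of the classification for `φ₁ = 3`:
`g ≡ 0 mod 3`, `g ≥ 6`, `(φ₁,…,φ₁₀) = (3, (g+3)/3, …, (g+3)/3)`. -/
def Phi3CaseA (g φ2 φ3 φ4 φ5 φ6 φ7 φ8 φ9 φ10 : ℤ) : Prop :=
  g % 3 = 0 ∧ 6 ≤ g ∧ 3 * φ2 = g + 3 ∧ 3 * φ3 = g + 3 ∧ 3 * φ4 = g + 3 ∧
    3 * φ5 = g + 3 ∧ 3 * φ6 = g + 3 ∧ 3 * φ7 = g + 3 ∧ 3 * φ8 = g + 3 ∧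
    3 * φ9 = g + 3 ∧ 3 * φ10 = g + 3

/-- Case (b): `g ≡ 0 mod 3`, `g ≥ 9`,
`(φ₁,…,φ₁₀) = (3, g/3, (g+3)/3, (g+6)/3, …, (g+6)/3)`. -/
def Phi3CaseB (g φ2 φ3 φ4 φ5 φ6 φ7 φ8 φ9 φ10 : ℤ) : Prop :=
  g % 3 = 0 ∧ 9 ≤ g ∧ 3 * φ2 = g ∧ 3 * φ3 = g + 3 ∧ 3 * φ4 = g + 6 ∧
    3 * φ5 = g + 6 ∧ 3 * φ6 = g + 6 ∧ 3 * φ7 = g + 6 ∧ 3 * φ8 = g + 6 ∧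
    3 * φ9 = g + 6 ∧ 3 * φ10 = g + 6

/-- Case (c): `g ≡ 1 mod 3`, `g ≥ 7`,
`(φ₁,…,φ₁₀) = (3, (g+2)/3, (g+2)/3, (g+2)/3, (g+5)/3, …, (g+5)/3)`. -/
def Phi3CaseC (g φ2 φ3 φ4 φ5 φ6 φ7 φ8 φ9 φ10 : ℤ) : Prop :=
  g % 3 = 1 ∧ 7 ≤ g ∧ 3 * φ2 = g + 2 ∧ 3 * φ3 = g + 2 ∧ 3 * φ4 = g + 2 ∧
    3 * φ5 = g + 5 ∧ 3 * φ6 = g + 5 ∧ 3 * φ7 = g + 5 ∧ 3 * φ8 = g + 5 ∧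
    3 * φ9 = g + 5 ∧ 3 * φ10 = g + 5

/-- Case (d): `g ≡ 1 mod 3`, `g ≥ 10`,
`(φ₁,…,φ₁₀) = (3, (g−1)/3, (g+8)/3, …, (g+8)/3)`. -/
def Phi3CaseD (g φ2 φ3 φ4 φ5 φ6 φ7 φ8 φ9 φ10 : ℤ) : Prop :=
  g % 3 = 1 ∧ 10 ≤ g ∧ 3 * φ2 = g - 1 ∧ 3 * φ3 = g + 8 ∧ 3 * φ4 = g + 8 ∧
    3 * φ5 = g + 8 ∧ 3 * φ6 = g + 8 ∧ 3 * φ7 = g + 8 ∧ 3 * φ8 = g + 8 ∧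
    3 * φ9 = g + 8 ∧ 3 * φ10 = g + 8

/-- Case (e): `g ≡ 2 mod 3`, `g ≥ 8`,
`(φ₁,…,φ₁₀) = (3, (g+1)/3, (g+4)/3, …, (g+4)/3, (g+7)/3)`. -/
def Phi3CaseE (g φ2 φ3 φ4 φ5 φ6 φ7 φ8 φ9 φ10 : ℤ) : Prop :=
  g % 3 = 2 ∧ 8 ≤ g ∧ 3 * φ2 = g + 1 ∧ 3 * φ3 = g + 4 ∧ 3 * φ4 = g + 4 ∧
    3 * φ5 = g + 4 ∧ 3 * φ6 = g + 4 ∧ 3 * φ7 = g + 4 ∧ 3 * φ8 = g + 4 ∧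
    3 * φ9 = g + 4 ∧ 3 * φ10 = g + 7

/-! Write `φᵢ = φ₂ + dᵢ`. With `φ₁ = 3`, condition (iii) becomes
`3 + d₃ + ⋯ + d₇ ≥ 2 (d₈ + d₉ + d₁₀)`; since `d₃, …, d₇ ≤ d₈ ≤ d₉ ≤ d₁₀` this forces `d₈ ≤ 3`,
and the slack `3 - d₈` left over, together with `3 ∣ d₃ + ⋯ + d₁₀`, leaves exactly five tuples
`(d₃, …, d₁₀)`. For a fixed tuple the quadratic condition (v) is linear in `φ₂` and `g`, which
gives `3 φ₂ - g`, and `φ₂ ≥ 3` gives the lower bound on `g`. -/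

theorem phiConds_three_shape {g φ2 φ3 φ4 φ5 φ6 φ7 φ8 φ9 φ10 : ℤ}
    (h : PhiConds g 3 φ2 φ3 φ4 φ5 φ6 φ7 φ8 φ9 φ10) :
    (φ3 = φ2 ∧ φ4 = φ2 ∧ φ5 = φ2 ∧ φ6 = φ2 ∧ φ7 = φ2 ∧ φ8 = φ2 ∧ φ9 = φ2 ∧ φ10 = φ2) ∨
    (φ3 = φ2 + 1 ∧ φ4 = φ2 + 2 ∧ φ5 = φ2 + 2 ∧ φ6 = φ2 + 2 ∧ φ7 = φ2 + 2 ∧ φ8 = φ2 + 2 ∧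
      φ9 = φ2 + 2 ∧ φ10 = φ2 + 2) ∨
    (φ3 = φ2 ∧ φ4 = φ2 ∧ φ5 = φ2 + 1 ∧ φ6 = φ2 + 1 ∧ φ7 = φ2 + 1 ∧ φ8 = φ2 + 1 ∧
      φ9 = φ2 + 1 ∧ φ10 = φ2 + 1) ∨
    (φ3 = φ2 + 3 ∧ φ4 = φ2 + 3 ∧ φ5 = φ2 + 3 ∧ φ6 = φ2 + 3 ∧ φ7 = φ2 + 3 ∧ φ8 = φ2 + 3 ∧
      φ9 = φ2 + 3 ∧ φ10 = φ2 + 3) ∨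
    (φ3 = φ2 + 1 ∧ φ4 = φ2 + 1 ∧ φ5 = φ2 + 1 ∧ φ6 = φ2 + 1 ∧ φ7 = φ2 + 1 ∧ φ8 = φ2 + 1 ∧
      φ9 = φ2 + 1 ∧ φ10 = φ2 + 2) := by
  obtain ⟨-, -, h23, h34, h45, h56, h67, h78, h89, h910, hdvd, hbal, -⟩ := h
  obtain h8 | h8 | h8 | h8 : φ8 = φ2 ∨ φ8 = φ2 + 1 ∨ φ8 = φ2 + 2 ∨ φ8 = φ2 + 3 := by omega
  · left; omega
  · obtain h10 | h10 : φ10 = φ2 + 1 ∨ φ10 = φ2 + 2 := by omega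
    · right; right; left; omega
    · right; right; right; right; omega
  · right; left; omega
  · right; right; right; left; omega

theorem phi3CaseA_of_phiConds {g φ2 : ℤ}
    (h : PhiConds g 3 φ2 φ2 φ2 φ2 φ2 φ2 φ2 φ2 φ2) :
    Phi3CaseA g φ2 φ2 φ2 φ2 φ2 φ2 φ2 φ2 φ2 := by
  obtain ⟨-, h2, -, -, -, -, -, -, -, -, -, -, hgenus⟩ := h
  have hg : 18 * (3 * φ2) = 18 * (g + 3) := by linear_combination hgenus
  unfold Phi3CaseA; omega

theorem phi3CaseB_of_phiConds {g φ2 : ℤ}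
    (h : PhiConds g 3 φ2 (φ2 + 1) (φ2 + 2) (φ2 + 2) (φ2 + 2) (φ2 + 2) (φ2 + 2) (φ2 + 2)
      (φ2 + 2)) :
    Phi3CaseB g φ2 (φ2 + 1) (φ2 + 2) (φ2 + 2) (φ2 + 2) (φ2 + 2) (φ2 + 2) (φ2 + 2)
      (φ2 + 2) := by
  obtain ⟨-, h2, -, -, -, -, -, -, -, -, -, -, hgenus⟩ := h
  have hg : 18 * (3 * φ2) = 18 * g := by linear_combination hgenus
  unfold Phi3CaseB; omega

theorem phi3CaseC_of_phiConds {g φ2 : ℤ}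
    (h : PhiConds g 3 φ2 φ2 φ2 (φ2 + 1) (φ2 + 1) (φ2 + 1) (φ2 + 1) (φ2 + 1) (φ2 + 1)) :
    Phi3CaseC g φ2 φ2 φ2 (φ2 + 1) (φ2 + 1) (φ2 + 1) (φ2 + 1) (φ2 + 1) (φ2 + 1) := by
  obtain ⟨-, h2, -, -, -, -, -, -, -, -, -, -, hgenus⟩ := h
  have hg : 18 * (3 * φ2) = 18 * (g + 2) := by linear_combination hgenus
  unfold Phi3CaseC; omega

theorem phi3CaseD_of_phiConds {g φ2 : ℤ}
    (h : PhiConds g 3 φ2 (φ2 + 3) (φ2 + 3) (φ2 + 3) (φ2 + 3) (φ2 + 3) (φ2 + 3) (φ2 + 3)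
      (φ2 + 3)) :
    Phi3CaseD g φ2 (φ2 + 3) (φ2 + 3) (φ2 + 3) (φ2 + 3) (φ2 + 3) (φ2 + 3) (φ2 + 3)
      (φ2 + 3) := by
  obtain ⟨-, h2, -, -, -, -, -, -, -, -, -, -, hgenus⟩ := h
  have hg : 18 * (3 * φ2) = 18 * (g - 1) := by linear_combination hgenus
  unfold Phi3CaseD; omega

theorem phi3CaseE_of_phiConds {g φ2 : ℤ}
    (h : PhiConds g 3 φ2 (φ2 + 1) (φ2 + 1) (φ2 + 1) (φ2 + 1) (φ2 + 1) (φ2 + 1) (φ2 + 1)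
      (φ2 + 2)) :
    Phi3CaseE g φ2 (φ2 + 1) (φ2 + 1) (φ2 + 1) (φ2 + 1) (φ2 + 1) (φ2 + 1) (φ2 + 1)
      (φ2 + 2) := by
  obtain ⟨-, h2, -, -, -, -, -, -, -, -, -, -, hgenus⟩ := h
  have hg : 18 * (3 * φ2) = 18 * (g + 1) := by linear_combination hgenus
  unfold Phi3CaseE; omega

/-- Classification of φ-vectors with `φ₁ = 3` (the paper's Example for `φ = 3`):
exactly one of the five listed cases holds. -/
theorem phi_vector_classification_phi_eq_three
    (g φ1 φ2 φ3 φ4 φ5 φ6 φ7 φ8 φ9 φ10 : ℤ)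
    (h : PhiConds g φ1 φ2 φ3 φ4 φ5 φ6 φ7 φ8 φ9 φ10)
    (h3 : φ1 = 3) :
    (Phi3CaseA g φ2 φ3 φ4 φ5 φ6 φ7 φ8 φ9 φ10 ∨
     Phi3CaseB g φ2 φ3 φ4 φ5 φ6 φ7 φ8 φ9 φ10 ∨
     Phi3CaseC g φ2 φ3 φ4 φ5 φ6 φ7 φ8 φ9 φ10 ∨
     Phi3CaseD g φ2 φ3 φ4 φ5 φ6 φ7 φ8 φ9 φ10 ∨
     Phi3CaseE g φ2 φ3 φ4 φ5 φ6 φ7 φ8 φ9 φ10) ∧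
    ¬(Phi3CaseA g φ2 φ3 φ4 φ5 φ6 φ7 φ8 φ9 φ10 ∧
      Phi3CaseB g φ2 φ3 φ4 φ5 φ6 φ7 φ8 φ9 φ10) ∧
    ¬(Phi3CaseA g φ2 φ3 φ4 φ5 φ6 φ7 φ8 φ9 φ10 ∧
      Phi3CaseC g φ2 φ3 φ4 φ5 φ6 φ7 φ8 φ9 φ10) ∧
    ¬(Phi3CaseA g φ2 φ3 φ4 φ5 φ6 φ7 φ8 φ9 φ10 ∧
      Phi3CaseD g φ2 φ3 φ4 φ5 φ6 φ7 φ8 φ9 φ10) ∧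
    ¬(Phi3CaseA g φ2 φ3 φ4 φ5 φ6 φ7 φ8 φ9 φ10 ∧
      Phi3CaseE g φ2 φ3 φ4 φ5 φ6 φ7 φ8 φ9 φ10) ∧
    ¬(Phi3CaseB g φ2 φ3 φ4 φ5 φ6 φ7 φ8 φ9 φ10 ∧
      Phi3CaseC g φ2 φ3 φ4 φ5 φ6 φ7 φ8 φ9 φ10) ∧
    ¬(Phi3CaseB g φ2 φ3 φ4 φ5 φ6 φ7 φ8 φ9 φ10 ∧
      Phi3CaseD g φ2 φ3 φ4 φ5 φ6 φ7 φ8 φ9 φ10) ∧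
    ¬(Phi3CaseB g φ2 φ3 φ4 φ5 φ6 φ7 φ8 φ9 φ10 ∧
      Phi3CaseE g φ2 φ3 φ4 φ5 φ6 φ7 φ8 φ9 φ10) ∧
    ¬(Phi3CaseC g φ2 φ3 φ4 φ5 φ6 φ7 φ8 φ9 φ10 ∧
      Phi3CaseD g φ2 φ3 φ4 φ5 φ6 φ7 φ8 φ9 φ10) ∧
    ¬(Phi3CaseC g φ2 φ3 φ4 φ5 φ6 φ7 φ8 φ9 φ10 ∧
      Phi3CaseE g φ2 φ3 φ4 φ5 φ6 φ7 φ8 φ9 φ10) ∧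
    ¬(Phi3CaseD g φ2 φ3 φ4 φ5 φ6 φ7 φ8 φ9 φ10 ∧
      Phi3CaseE g φ2 φ3 φ4 φ5 φ6 φ7 φ8 φ9 φ10) := by
  subst h3
  refine ⟨?_, ?_⟩
  · obtain ⟨rfl, rfl, rfl, rfl, rfl, rfl, rfl, rfl⟩ | ⟨rfl, rfl, rfl, rfl, rfl, rfl, rfl, rfl⟩ |
        ⟨rfl, rfl, rfl, rfl, rfl, rfl, rfl, rfl⟩ | ⟨rfl, rfl, rfl, rfl, rfl, rfl, rfl, rfl⟩ |
        ⟨rfl, rfl, rfl, rfl, rfl, rfl, rfl, rfl⟩ := phiConds_three_shape h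
    · exact Or.inl (phi3CaseA_of_phiConds h)
    · exact Or.inr (Or.inl (phi3CaseB_of_phiConds h))
    · exact Or.inr (Or.inr (Or.inl (phi3CaseC_of_phiConds h)))
    · exact Or.inr (Or.inr (Or.inr (Or.inl (phi3CaseD_of_phiConds h))))
    · exact Or.inr (Or.inr (Or.inr (Or.inr (phi3CaseE_of_phiConds h))))
  · -- the five cases are told apart by `g % 3` and `3 * φ2 - g`
    refine ⟨?_, ?_, ?_, ?_, ?_, ?_, ?_, ?_, ?_, ?_⟩ <;>
      rintro ⟨⟨hg, -, hφ2, -⟩, ⟨hg', -, hφ2', -⟩⟩ <;> omega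
end
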